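/- arXiv:2411.14267 — 10 statements merged into one kernel-verified Lean document; each statement's English description precedes it below -/
import Mathlib

section
/- Let k ≥ 2 and 1 ≤ c ≤ k-1, and let P_1, …, P_k be pairwise coprime integers. For i ∈ [k] define m_i = 2(k+c) · P_i · P_{i+1} ⋯ P_{i+c} (indices taken cyclically modulo k) and L = 2(k+c) · P_1 ⋯ P_k. Then for every subset I ⊆ [k] with |I| ≥ k - c, the least common multiple of {m_i : i ∈ I} equals L. -/
/-!
Pulling out the common factor `2(k+c)`, it remains to show that the windows
`P_i ⋯ P_{i+c}` with `i ∈ I` have least common multiple `P_1 ⋯ P_k`. Each window divides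
this product, and since the `P`'s are pairwise coprime it suffices that every `P_t` divides
some window, i.e. that every residue `t` is `i + j` with `i ∈ I` and `0 ≤ j ≤ c`. This is
pigeonhole: `I` and `{t, t-1, …, t-c}` cannot be disjoint, as `|I| + (c+1) > k`.
-/

open Finset
open scoped Pointwise

theorem Finset.lcm_mul_left {ι α : Type*} [CommMonoidWithZero α]
    [StrongNormalizedGCDMonoid α] {s : Finset ι} (hs : s.Nonempty) (a : α) (f : ι → α) :
    s.lcm (fun i => a * f i) = normalize a * s.lcm f := by
  classical
  induction hs using Finset.Nonempty.cons_induction with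
  | singleton i => simp only [lcm_singleton, normalize_mul]
  | cons i s _ _ ih =>
    rw [cons_eq_insert, lcm_insert, lcm_insert, ih, ← _root_.lcm_mul_left]
    exact lcm_eq_of_associated_right ((normalize_associated a).mul_right _) _

theorem Finset.lcm_eq_prod_of_pairwise_coprime {ι α : Type*} [Fintype α] {P : α → ℕ}
    (hP : Pairwise fun a b => Nat.Coprime (P a) (P b)) {s : Finset ι} {f : ι → ℕ}
    (hdvd : ∀ i ∈ s, f i ∣ ∏ t, P t) (hcover : ∀ t, ∃ i ∈ s, P t ∣ f i) :
    s.lcm f = ∏ t, P t :=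
  Nat.dvd_antisymm (lcm_dvd hdvd) <|
    Fintype.prod_dvd_of_isRelPrime (fun _ _ h => Nat.coprime_iff_isRelPrime.mp (hP h))
      fun t => let ⟨_, hi, ht⟩ := hcover t; ht.trans (dvd_lcm hi)

theorem Finset.add_eq_univ_of_card_lt_card_add_card {G : Type*} [AddGroup G] [Fintype G]
    [DecidableEq G] {s t : Finset G} (h : Fintype.card G < #s + #t) : s + t = univ := by
  refine eq_univ_of_forall fun g => ?_
  have hcard : #(t.image (g - ·)) = #t := card_image_of_injective _ sub_right_injective
  obtain ⟨a, ha⟩ := inter_nonempty_of_card_lt_card_add_card (subset_univ s)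
    (subset_univ (t.image (g - ·))) (by rwa [hcard, card_univ])
  obtain ⟨has, hat⟩ := mem_inter.mp ha
  obtain ⟨b, hb, rfl⟩ := mem_image.mp hat
  exact mem_add.mpr ⟨g - b, has, b, hb, sub_add_cancel g b⟩

namespace ZMod

theorem natCast_injOn_range {k n : ℕ} (hn : n ≤ k) :
    Set.InjOn (Nat.cast : ℕ → ZMod k) (range n) := by
  intro a ha b hb hab
  have ha' : a < k := (mem_range.mp ha).trans_le hn
  have hb' : b < k := (mem_range.mp hb).trans_le hn
  simpa only [val_cast_of_lt ha', val_cast_of_lt hb'] using congrArg val hab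

theorem prod_range_dvd_prod_univ {k n : ℕ} [NeZero k] {M : Type*} [CommMonoid M]
    (hn : n ≤ k) (P : ZMod k → M) (i : ZMod k) :
    ∏ j ∈ range n, P (i + j) ∣ ∏ t, P t := by
  rw [← prod_image (f := P) fun a ha b hb hab =>
    natCast_injOn_range hn ha hb (add_left_cancel hab)]
  exact prod_dvd_prod_of_subset _ _ _ (subset_univ _)

theorem exists_mem_add_natCast_eq {k n : ℕ} [NeZero k] {s : Finset (ZMod k)} (hn : n ≤ k)
    (hs : k < #s + n) (t : ZMod k) : ∃ i ∈ s, ∃ j ∈ range n, i + j = t := by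
  have hwindow : #((range n).image (Nat.cast : ℕ → ZMod k)) = n :=
    (card_image_of_injOn (natCast_injOn_range hn)).trans (card_range n)
  have ht : t ∈ s + (range n).image (Nat.cast : ℕ → ZMod k) := by
    rw [add_eq_univ_of_card_lt_card_add_card (by rwa [hwindow, card])]
    exact mem_univ t
  obtain ⟨i, hi, _, hwin, rfl⟩ := mem_add.mp ht
  obtain ⟨j, hj, rfl⟩ := mem_image.mp hwin
  exact ⟨i, hi, j, hj, rfl⟩

end ZMod

theorem stmt_0_general (k c : ℕ) [NeZero k] (hc2 : c ≤ k - 1)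
    (P : ZMod k → ℕ)
    (hP : ∀ i j : ZMod k, i ≠ j → Nat.Coprime (P i) (P j))
    (m : ZMod k → ℕ)
    (hm : ∀ i : ZMod k, m i = 2 * (k + c) * ∏ j ∈ Finset.range (c + 1), P (i + (j : ZMod k)))
    (L : ℕ) (hL : L = 2 * (k + c) * ∏ i : ZMod k, P i)
    (I : Finset (ZMod k)) (hI : k - c ≤ I.card) :
    I.lcm m = L := by
  have hck : c + 1 ≤ k := by have := NeZero.pos k; omega
  have hIne : I.Nonempty := card_pos.mp (by omega)
  rw [hL, lcm_congr rfl fun i _ => hm i, I.lcm_mul_left hIne, normalize_eq]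
  congr 1
  refine lcm_eq_prod_of_pairwise_coprime (fun i j => hP i j)
    (fun i _ => ZMod.prod_range_dvd_prod_univ hck P i) fun t => ?_
  obtain ⟨i, hi, j, hj, rfl⟩ := ZMod.exists_mem_add_natCast_eq (s := I) hck (by omega) t
  exact ⟨i, hi, dvd_prod_of_mem (fun j : ℕ => P (i + j)) hj⟩

/-- For pairwise coprime positive `P₁,…,P_k`, moduli
`m_i = 2(k+c)·P_i⋯P_{i+c}` (cyclic indices) and `L = 2(k+c)·P_1⋯P_k`,
every subset `I` of rows with `|I| ≥ k - c` satisfies `lcm {m_i : i ∈ I} = L`. -/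
theorem stmt_0 (k c : ℕ) [NeZero k] (hk : 2 ≤ k) (hc1 : 1 ≤ c) (hc2 : c ≤ k - 1)
    (P : ZMod k → ℕ) (hPpos : ∀ i, 0 < P i)
    (hP : ∀ i j : ZMod k, i ≠ j → Nat.Coprime (P i) (P j))
    (m : ZMod k → ℕ)
    (hm : ∀ i : ZMod k, m i = 2 * (k + c) * ∏ j ∈ Finset.range (c + 1), P (i + (j : ZMod k)))
    (L : ℕ) (hL : L = 2 * (k + c) * ∏ i : ZMod k, P i)
    (I : Finset (ZMod k)) (hI : k - c ≤ I.card) :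
    I.lcm m = L :=
  stmt_0_general k c hc2 P hP m hm L hL I hI
end

section
/- Let k ≥ 2 and 1 ≤ c ≤ k-1, and let P_1, …, P_k be pairwise coprime positive integers. Define m_i = 2(k+c) · P_i · P_{i+1} ⋯ P_{i+c} with cyclic indices modulo k. Then for every i ∈ [k] and all integers a, b ≥ 1 with a + b ≤ c + 1, the modulus m_i divides lcm( gcd(m_{i-a}, m_{i-a+1}, …, m_i), gcd(m_i, m_{i+1}, …, m_{i+b}) ), where index intervals are cyclic modulo k. -/
/-!
Put `g j = P (i - a + j)`, so that `m (i - a + t) = 2(k+c) · ∏_{t ≤ j < t+c+1} g j` is a window of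
length `c + 1`. Every left window (`t ≤ a`) contains `[a, c+1)` and every right window
(`a ≤ t ≤ a+b`) contains `[a+b, a+c+1)`. These two intervals cover the window `[a, a+c+1)` of `m i`,
and what each of them misses, `[c+1, a+c+1)` resp. `[a, a+b)`, consists of indices at distance
less than `k` from each other, hence of pairwise coprime factors. So the lcm of the two partial
products is the full product.
-/

open Finset

lemma ZMod.natCast_ne_natCast_of_lt {k j j' : ℕ} (hjj' : j < j') (hj' : j' < j + k) :
    (j : ZMod k) ≠ j' := by
  intro h
  have hmod := (ZMod.natCast_eq_natCast_iff j j' k).mp h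
  have := hmod.eq_of_abs_lt (abs_sub_lt_iff.mpr ⟨by omega, by omega⟩)
  omega

lemma Nat.lcm_mul_mul_of_coprime {x y : ℕ} (d z : ℕ) (h : x.Coprime y) :
    Nat.lcm (d * (x * z)) (d * (z * y)) = d * (x * z * y) := by
  rw [Nat.lcm_mul_left, mul_comm x z, Nat.lcm_mul_left, h.lcm_eq_mul]
  ring

lemma Finset.mul_prod_Ico_eq_lcm (g : ℕ → ℕ) (d : ℕ) {l p q r : ℕ}
    (hlp : l ≤ p) (hpq : p ≤ q) (hqr : q ≤ r)
    (hcop : ∀ j ∈ Ico l p, ∀ j' ∈ Ico q r, (g j).Coprime (g j')) :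
    d * ∏ j ∈ Ico l r, g j =
      Nat.lcm (d * ∏ j ∈ Ico l q, g j) (d * ∏ j ∈ Ico p r, g j) := by
  have hXY : (∏ j ∈ Ico l p, g j).Coprime (∏ j ∈ Ico q r, g j) :=
    Nat.Coprime.prod_left fun j hj => Nat.Coprime.prod_right fun j' hj' => hcop j hj j' hj'
  rw [← prod_Ico_consecutive g (hlp.trans hpq) hqr, ← prod_Ico_consecutive g hlp hpq,
    ← prod_Ico_consecutive g hpq hqr, Nat.lcm_mul_mul_of_coprime d _ hXY]

lemma Finset.prod_range_add_eq_prod_Ico {R : Type*} [AddMonoidWithOne R] (P : R → ℕ) (s : R)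
    (t n : ℕ) : ∏ j ∈ range n, P (s + t + j) = ∏ j ∈ Ico t (t + n), P (s + j) := by
  have hshift := prod_Ico_add (fun j : ℕ => P (s + j)) 0 n t
  rw [zero_add, add_comm n] at hshift
  rw [range_eq_Ico, ← hshift]
  push_cast
  simp only [add_assoc]

theorem stmt_1_general (k c : ℕ) [NeZero k] (hc2 : c ≤ k - 1)
    (P : ZMod k → ℕ)
    (hP : ∀ i j : ZMod k, i ≠ j → Nat.Coprime (P i) (P j))
    (m : ZMod k → ℕ)
    (hm : ∀ i : ZMod k, m i = 2 * (k + c) * ∏ j ∈ Finset.range (c + 1), P (i + (j : ZMod k)))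
    (i : ZMod k) (a b : ℕ) (hab : a + b ≤ c + 1) :
    m i ∣ Nat.lcm
      ((Finset.range (a + 1)).gcd (fun t => m (i - (a : ZMod k) + (t : ZMod k))))
      ((Finset.range (b + 1)).gcd (fun t => m (i + (t : ZMod k)))) := by
  set g : ℕ → ℕ := fun j => P (i - a + j)
  have hwindow (t : ℕ) : m (i - a + t) = 2 * (k + c) * ∏ j ∈ Ico t (t + (c + 1)), g j := by
    rw [hm, prod_range_add_eq_prod_Ico]
  have hcop : ∀ j ∈ Ico a (a + b), ∀ j' ∈ Ico (c + 1) (a + (c + 1)), (g j).Coprime (g j') := by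
    intro j hj j' hj'
    rw [mem_Ico] at hj hj'
    exact hP _ _ fun h => ZMod.natCast_ne_natCast_of_lt (k := k) (by omega) (by omega)
      (add_left_cancel h)
  have hmi : m i = 2 * (k + c) * ∏ j ∈ Ico a (a + (c + 1)), g j := by
    simpa using hwindow a
  rw [hmi, mul_prod_Ico_eq_lcm g _ (by omega : a ≤ a + b) (by omega : a + b ≤ c + 1) (by omega)
    hcop]
  refine lcm_dvd_lcm (Finset.dvd_gcd fun t ht => ?_) (Finset.dvd_gcd fun t ht => ?_)
  · rw [mem_range] at ht
    rw [hwindow t]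
    exact mul_dvd_mul_left _ (prod_dvd_prod_of_subset _ _ _ (Ico_subset_Ico (by omega) (by omega)))
  · rw [mem_range] at ht
    rw [show i + t = i - a + ((a + t : ℕ) : ZMod k) by push_cast; abel, hwindow]
    exact mul_dvd_mul_left _ (prod_dvd_prod_of_subset _ _ _ (Ico_subset_Ico (by omega) (by omega)))

/-- With cyclic moduli `m_i = 2(k+c)·P_i⋯P_{i+c}` for pairwise coprime
positive `P`, for all `a, b ≥ 1` with `a + b ≤ c + 1`, `m_i` divides
`lcm(gcd(m_{i-a},…,m_i), gcd(m_i,…,m_{i+b}))`. -/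
theorem stmt_1 (k c : ℕ) [NeZero k] (hk : 2 ≤ k) (hc1 : 1 ≤ c) (hc2 : c ≤ k - 1)
    (P : ZMod k → ℕ) (hPpos : ∀ i, 0 < P i)
    (hP : ∀ i j : ZMod k, i ≠ j → Nat.Coprime (P i) (P j))
    (m : ZMod k → ℕ)
    (hm : ∀ i : ZMod k, m i = 2 * (k + c) * ∏ j ∈ Finset.range (c + 1), P (i + (j : ZMod k)))
    (i : ZMod k) (a b : ℕ) (ha : 1 ≤ a) (hb : 1 ≤ b) (hab : a + b ≤ c + 1) :
    m i ∣ Nat.lcm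
      ((Finset.range (a + 1)).gcd (fun t => m (i - (a : ZMod k) + (t : ZMod k))))
      ((Finset.range (b + 1)).gcd (fun t => m (i + (t : ZMod k)))) :=
  stmt_1_general k c hc2 P hP m hm i a b hab
end

section
/- Let F be any CNF formula over Boolean variables, and let F^mon be the CNF obtained from F by replacing every positive literal p with the negative literal ¬p (i.e., negating each positive literal in each clause). Then the number of satisfying assignments of F is at most the number of satisfying assignments of F^mon. -/
/-!
Monotonize one variable at a time, by down-compression. If `v` is not yet monotonized,
send a model `σ` of the current formula to itself when it already satisfies the formula
with `v` monotonized, and to `σ[v := false]` otherwise. A model of the second kind has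
`σ v = true` and a clause that it satisfies only through the literal `v`; since that clause
cannot also contain `¬v`, the assignment `σ[v := false]` is not a model of the current
formula, so the two kinds of images never collide and the map is injective.
-/

open Function

theorem Nat.card_le_card_of_compression {α : Type*} {P Q : α → Prop} [Finite {x // Q x}]
    (f : α → α) (hf : ∀ x, P x → Q (f x)) (hf_not : ∀ x, P x → ¬ Q x → ¬ P (f x))
    (hf_inj : Set.InjOn f {x | P x ∧ ¬ Q x}) :
    Nat.card {x // P x} ≤ Nat.card {x // Q x} := by
  classical
  refine Nat.card_le_card_of_injective
    (fun x => if hx : Q x.1 then ⟨x.1, hx⟩ else ⟨f x.1, hf x.1 x.2⟩) ?_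
  rintro ⟨x, hPx⟩ ⟨y, hPy⟩ hxy
  by_cases hQx : Q x <;> by_cases hQy : Q y <;>
    simp only [hQx, hQy, dif_pos, dif_neg, not_false_iff, Subtype.mk.injEq] at hxy
  · exact Subtype.ext hxy
  · exact (hf_not y hPy hQy (hxy ▸ hPx)).elim
  · exact (hf_not x hPx hQx (hxy ▸ hPy)).elim
  · exact Subtype.ext (hf_inj ⟨hPx, hQx⟩ ⟨hPy, hQy⟩ hxy)

namespace CNF

variable {V : Type*} [DecidableEq V]

/-- `σ` satisfies the CNF `F` in which every positive literal over a variable of `S` has been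
replaced by the corresponding negative literal. -/
def SatisfiesMonOn (F : Finset (Finset (V × Bool))) (S : Finset V) (σ : V → Bool) : Prop :=
  ∀ C ∈ F, ∃ l ∈ C, σ l.1 = (l.2 && decide (l.1 ∉ S))

variable {F : Finset (Finset (V × Bool))} {S : Finset V} {v : V} {σ : V → Bool}

lemma and_decide_notMem_insert_of_ne {u : V} (b : Bool) (h : u ≠ v) :
    (b && decide (u ∉ insert v S)) = (b && decide (u ∉ S)) := by
  simp [Finset.mem_insert, h]

lemma SatisfiesMonOn.update_false (hσ : SatisfiesMonOn F S σ) :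
    SatisfiesMonOn F (insert v S) (update σ v false) := by
  intro C hC
  obtain ⟨l, hl, hσl⟩ := hσ C hC
  refine ⟨l, hl, ?_⟩
  by_cases h : l.1 = v
  · simp [h]
  · rw [update_of_ne h, hσl, and_decide_notMem_insert_of_ne _ h]

lemma SatisfiesMonOn.apply_eq_true (hσ : SatisfiesMonOn F S σ)
    (hσ' : ¬ SatisfiesMonOn F (insert v S) σ) : σ v = true := by
  by_contra h
  rw [Bool.not_eq_true] at h
  exact hσ' (update_eq_self v σ ▸ h ▸ hσ.update_false)

lemma not_satisfiesMonOn_update_false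
    (hF : ∀ C ∈ F, ∀ v : V, ¬ ((v, true) ∈ C ∧ (v, false) ∈ C)) (hv : v ∉ S)
    (hσ : SatisfiesMonOn F S σ) (hσ' : ¬ SatisfiesMonOn F (insert v S) σ) :
    ¬ SatisfiesMonOn F S (update σ v false) := by
  intro hτ
  have hσv : σ v = true := hσ.apply_eq_true hσ'
  simp only [SatisfiesMonOn, not_forall, not_exists, not_and] at hσ'
  obtain ⟨C, hC, hC_false⟩ := hσ'
  -- The two formulas agree off `v`, so whatever agrees with `σ` off `v` can satisfy `C` only at `v`.
  have h_on_v : ∀ τ : V → Bool, (∀ u ≠ v, τ u = σ u) → ∀ l ∈ C,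
      τ l.1 = (l.2 && decide (l.1 ∉ S)) → l.1 = v := by
    intro τ hτσ l hl hτl
    by_contra h
    exact hC_false l hl (by rw [← hτσ _ h, hτl, and_decide_notMem_insert_of_ne _ h])
  obtain ⟨⟨u, b⟩, hl, hτl⟩ := hτ C hC
  obtain rfl : v = u := (h_on_v _ (fun _ hu => update_of_ne hu _ _) _ hl hτl).symm
  obtain rfl : b = false := by simpa [hv] using hτl.symm
  obtain ⟨⟨u', b'⟩, hl', hσl'⟩ := hσ C hC
  obtain rfl : v = u' := (h_on_v σ (fun _ _ => rfl) _ hl' hσl').symm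
  obtain rfl : b' = true := by simpa [hv, hσv] using hσl'.symm
  exact hF C hC v ⟨hl', hl⟩

lemma card_satisfiesMonOn_le_insert [Finite V]
    (hF : ∀ C ∈ F, ∀ v : V, ¬ ((v, true) ∈ C ∧ (v, false) ∈ C)) (hv : v ∉ S) :
    Nat.card {σ // SatisfiesMonOn F S σ} ≤ Nat.card {σ // SatisfiesMonOn F (insert v S) σ} := by
  refine Nat.card_le_card_of_compression (update · v false)
    (fun σ hσ => hσ.update_false)
    (fun σ hσ hσ' => not_satisfiesMonOn_update_false hF hv hσ hσ') ?_
  rintro σ ⟨hσ, hσ'⟩ τ ⟨hτ, hτ'⟩ h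
  funext u
  by_cases hu : u = v
  · rw [hu, hσ.apply_eq_true hσ', hτ.apply_eq_true hτ']
  · simpa [hu] using congrFun h u

lemma card_satisfiesMonOn_empty_le [Finite V]
    (hF : ∀ C ∈ F, ∀ v : V, ¬ ((v, true) ∈ C ∧ (v, false) ∈ C)) (S : Finset V) :
    Nat.card {σ // SatisfiesMonOn F ∅ σ} ≤ Nat.card {σ // SatisfiesMonOn F S σ} := by
  induction S using Finset.induction_on with
  | empty => rfl
  | insert v S hv ih => exact ih.trans (card_satisfiesMonOn_le_insert hF hv)

end CNF

/-- Monotonizing a CNF (negating every positive literal, so that the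
resulting CNF has only negative literals) does not decrease the number of satisfying
assignments. Clauses are finsets of literals `(v, b)` over pairwise distinct variables. -/
theorem stmt_3 (V : Type) [Fintype V] [DecidableEq V]
    (F : Finset (Finset (V × Bool)))
    (hF : ∀ C ∈ F, ∀ v : V, ¬ ((v, true) ∈ C ∧ (v, false) ∈ C)) :
    Fintype.card {σ : V → Bool // ∀ C ∈ F, ∃ l ∈ C, σ l.1 = l.2}
      ≤ Fintype.card {σ : V → Bool //
          ∀ C ∈ F, ∃ l ∈ C.image (fun l : V × Bool => (l.1, false)), σ l.1 = l.2} := by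
  have h := CNF.card_satisfiesMonOn_empty_le hF Finset.univ
  simp only [CNF.SatisfiesMonOn, Finset.notMem_empty, Finset.mem_univ, not_true_eq_false,
    not_false_eq_true, decide_true, decide_false, Bool.and_true, Bool.and_false] at h
  rw [Nat.card_eq_fintype_card, Nat.card_eq_fintype_card] at h
  simpa only [Finset.exists_mem_image] using h
end

section
/- Let S_1, …, S_l be subsets of a finite set U, each of size r ≥ 1, such that the sequence is κ-spread: for every W ⊆ U, |{i ∈ [l] : W ⊆ S_i}| ≤ l · κ^{-|W|}. Let p ∈ (0,1) and let W be a random subset of U obtained by including each element independently with probability p. If pκ ≥ (r-1)/ln 2, then the probability that no S_i is contained in W is at most exp(-pκ/(2r)). -/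
/-!
Let `N(A)` be the number of `Sᵢ` contained in the random set `A` and `ψ(t) = 𝔼 e^{-tN}`.
Then `-ψ'(t) = ∑ᵢ 𝔼[1{Sᵢ ⊆ A} e^{-tN}]`, and conditioning on `Sᵢ ⊆ A` amounts to adding `Sᵢ` to the
sample. Split `N` into the count `Y` of the `Sⱼ` meeting `Sᵢ` and the count `Z` of those disjoint
from it: Harris's inequality decouples `e^{-tY}` and `e^{-tZ}`, Jensen bounds the first below by
`e^{-tb}` where `b` bounds the conditional expectation of `Y`, and the second does not see the
conditioning and dominates `e^{-tN}`. Hence `ψ' ≤ -μ e^{-tb} ψ` with `μ = ∑ᵢ P(Sᵢ ⊆ A)`, and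
integrating gives Janson's bound `P(N = 0) ≤ ψ(∞) ≤ exp(-μ/b)`.

For a `κ`-spread family of `r`-sets, `μ = l pʳ`, and grouping the `Sⱼ` meeting `Sᵢ` by
`W = Sᵢ ∩ Sⱼ` gives `b ≤ l ((p + 1/κ)ʳ - pʳ)`. So `μ/b = 1/((1 + x)ʳ - 1)` with `x = 1/(pκ)`, and
`(r - 1) x ≤ ln 2` makes `(1 + x)ʳ - 1 ≤ 2 r x`.
-/

open Finset Real Filter Topology

section BernoulliProduct

variable {U : Type*} [Fintype U] [DecidableEq U] {η : U → ℝ}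

noncomputable def bernoulliWeight (η : U → ℝ) (A : Finset U) : ℝ :=
  ∏ u, if u ∈ A then η u else 1 - η u

noncomputable def bernoulliExpect (η : U → ℝ) (G : Finset U → ℝ) : ℝ :=
  ∑ A, bernoulliWeight η A * G A

lemma bernoulliWeight_nonneg (hη : ∀ u, η u ∈ Set.Icc 0 1) (A : Finset U) :
    0 ≤ bernoulliWeight η A :=
  prod_nonneg fun u _ => by split_ifs <;> linarith [(hη u).1, (hη u).2]

lemma bernoulliWeight_eq_prod_mul_prod (η : U → ℝ) (A : Finset U) :
    bernoulliWeight η A = (∏ u ∈ A, η u) * ∏ u ∈ univ \ A, (1 - η u) := by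
  rw [bernoulliWeight, prod_ite, filter_mem_eq_inter, univ_inter, filter_not, filter_mem_eq_inter,
    univ_inter]

lemma sum_bernoulliWeight (η : U → ℝ) : ∑ A, bernoulliWeight η A = 1 := by
  have h := prod_add η (fun u => 1 - η u) univ
  simp only [add_sub_cancel, prod_const_one, powerset_univ] at h
  rw [h]
  exact sum_congr rfl fun A _ => bernoulliWeight_eq_prod_mul_prod η A

lemma bernoulliWeight_inter_mul_union (η : U → ℝ) (A B : Finset U) :
    bernoulliWeight η (A ∩ B) * bernoulliWeight η (A ∪ B) =
      bernoulliWeight η A * bernoulliWeight η B := by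
  simp only [bernoulliWeight, ← prod_mul_distrib]
  refine prod_congr rfl fun u _ => ?_
  by_cases hA : u ∈ A <;> by_cases hB : u ∈ B <;> simp [hA, hB, mul_comm]

lemma bernoulliExpect_const (η : U → ℝ) (c : ℝ) : bernoulliExpect η (fun _ => c) = c := by
  rw [bernoulliExpect, ← sum_mul, sum_bernoulliWeight, one_mul]

lemma bernoulliExpect_const_mul (η : U → ℝ) (c : ℝ) (G : Finset U → ℝ) :
    bernoulliExpect η (fun A => c * G A) = c * bernoulliExpect η G := by
  simp only [bernoulliExpect, mul_sum, mul_left_comm]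

lemma bernoulliExpect_neg (η : U → ℝ) (G : Finset U → ℝ) :
    bernoulliExpect η (fun A => -G A) = -bernoulliExpect η G := by
  simp only [bernoulliExpect, mul_neg, sum_neg_distrib]

lemma bernoulliExpect_sum {ι : Type*} (η : U → ℝ) (s : Finset ι) (F : ι → Finset U → ℝ) :
    bernoulliExpect η (fun A => ∑ i ∈ s, F i A) = ∑ i ∈ s, bernoulliExpect η (F i) := by
  simp only [bernoulliExpect, mul_sum]
  exact sum_comm

lemma bernoulliExpect_mono (hη : ∀ u, η u ∈ Set.Icc 0 1) {G H : Finset U → ℝ}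
    (h : ∀ A, G A ≤ H A) : bernoulliExpect η G ≤ bernoulliExpect η H :=
  sum_le_sum fun A _ => mul_le_mul_of_nonneg_left (h A) (bernoulliWeight_nonneg hη A)

lemma bernoulliExpect_nonneg (hη : ∀ u, η u ∈ Set.Icc 0 1) {G : Finset U → ℝ}
    (h : ∀ A, 0 ≤ G A) : 0 ≤ bernoulliExpect η G :=
  sum_nonneg fun A _ => mul_nonneg (bernoulliWeight_nonneg hη A) (h A)

lemma bernoulliExpect_ite_mem (a : U) (F : Finset U → ℝ) :
    bernoulliExpect η (fun A => if a ∈ A then F A else 0) =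
      η a * bernoulliExpect η (fun A => F (insert a A)) := by
  set c : Finset U → ℝ := fun A => ∏ u ∈ univ.erase a, if u ∈ A then η u else 1 - η u
  have hweight : ∀ A, bernoulliWeight η A = (if a ∈ A then η a else 1 - η a) * c A :=
    fun A => (mul_prod_erase univ _ (mem_univ a)).symm
  have hc : ∀ A, c (insert a A) = c A := fun A =>
    prod_congr rfl fun u hu => by simp [ne_of_mem_erase hu]
  have hsplit : ∀ f : Finset U → ℝ,
      ∑ A, f A = ∑ A ∈ (univ.erase a).powerset, (f A + f (insert a A)) := by
    intro f
    rw [sum_add_distrib, ← sum_powerset_insert (notMem_erase a univ), insert_erase (mem_univ a),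
      powerset_univ]
  simp only [bernoulliExpect, hsplit, mul_sum]
  refine sum_congr rfl fun A hA => ?_
  have ha : a ∉ A := fun h => notMem_erase a univ (mem_powerset.mp hA h)
  simp only [hweight, hc, insert_idem, mem_insert_self, ha, if_true, if_false]
  ring

lemma bernoulliExpect_ite_subset (T : Finset U) (G : Finset U → ℝ) :
    bernoulliExpect η (fun A => if T ⊆ A then G A else 0) =
      (∏ u ∈ T, η u) * bernoulliExpect η (fun A => G (A ∪ T)) := by
  induction T using Finset.induction_on generalizing G with
  | empty => simp
  | insert a T ha ih =>
    have hT : ∀ A, T ⊆ insert a A ↔ T ⊆ A := fun A => subset_insert_iff_of_notMem ha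
    simp only [insert_subset_iff, ite_and]
    rw [bernoulliExpect_ite_mem, prod_insert ha, mul_assoc]
    simp only [hT, ih, union_insert]

lemma bernoulliExpect_indicator_subset (T : Finset U) :
    bernoulliExpect η (fun A => if T ⊆ A then 1 else 0) = ∏ u ∈ T, η u := by
  simpa [bernoulliExpect_const] using bernoulliExpect_ite_subset (η := η) T fun _ => 1

lemma exp_bernoulliExpect_le (hη : ∀ u, η u ∈ Set.Icc 0 1) (G : Finset U → ℝ) :
    exp (bernoulliExpect η G) ≤ bernoulliExpect η (fun A => exp (G A)) :=
  convexOn_exp.map_sum_le (fun A _ => bernoulliWeight_nonneg hη A) (sum_bernoulliWeight η)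
    (fun _ _ => Set.mem_univ _)

lemma bernoulliExpect_mul_bernoulliExpect_le (hη : ∀ u, η u ∈ Set.Icc 0 1)
    {f g : Finset U → ℝ} (hf₀ : 0 ≤ f) (hg₀ : 0 ≤ g) (hf : Antitone f) (hg : Antitone g) :
    bernoulliExpect η f * bernoulliExpect η g ≤ bernoulliExpect η (fun A => f A * g A) := by
  have h := fkg (α := (Finset U)ᵒᵈ) f g (bernoulliWeight η) (bernoulliWeight_nonneg hη) hf₀ hg₀
    hf.dual_left hg.dual_left fun A B =>
      ((bernoulliWeight_inter_mul_union η A B).symm.trans (mul_comm _ _)).le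
  have hsum : ∑ A : (Finset U)ᵒᵈ, bernoulliWeight η A = 1 := sum_bernoulliWeight η
  rwa [hsum, one_mul] at h

lemma hasDerivAt_bernoulliExpect {F : ℝ → Finset U → ℝ} {F' : Finset U → ℝ} {t : ℝ}
    (h : ∀ A, HasDerivAt (fun s => F s A) (F' A) t) :
    HasDerivAt (fun s => bernoulliExpect η (F s)) (bernoulliExpect η F') t :=
  HasDerivAt.fun_sum fun A _ => (h A).const_mul _

lemma sum_bool_eq_bernoulliExpect (η : U → ℝ) (G : Finset U → ℝ) :
    ∑ f : U → Bool, (∏ u, if f u then η u else 1 - η u) * G {u | f u} = bernoulliExpect η G := by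
  let e : (U → Bool) ≃ Finset U :=
    ⟨fun f => ({u | f u} : Finset U), fun A u => decide (u ∈ A), fun f => by ext; simp,
      fun A => by ext; simp⟩
  exact Fintype.sum_equiv e _ _ fun f => by simp [e, bernoulliWeight]

end BernoulliProduct

lemma le_mul_exp_sub_of_hasDerivAt {f f' g g' : ℝ → ℝ} (hf : ∀ t, HasDerivAt f (f' t) t)
    (hg : ∀ t, HasDerivAt g (g' t) t) (h : ∀ t, 0 ≤ t → f' t ≤ -(g' t * f t)) {T : ℝ}
    (hT : 0 ≤ T) : f T ≤ f 0 * exp (g 0 - g T) := by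
  have hφ : ∀ t, HasDerivAt (fun t => f t * exp (g t))
      (exp (g t) * (f' t + g' t * f t)) t := fun t =>
    ((hf t).mul (hg t).exp).congr_deriv (by ring)
  have hanti : AntitoneOn (fun t => f t * exp (g t)) (Set.Ici 0) := by
    refine antitoneOn_of_deriv_nonpos (convex_Ici 0)
      (fun t _ => (hφ t).continuousAt.continuousWithinAt)
      (fun t _ => (hφ t).differentiableAt.differentiableWithinAt) fun t ht => ?_
    rw [interior_Ici] at ht
    rw [(hφ t).deriv]
    exact mul_nonpos_of_nonneg_of_nonpos (exp_pos _).le (by linarith [h t (le_of_lt ht)])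
  have := hanti Set.self_mem_Ici hT hT
  rw [exp_sub, mul_div_assoc', le_div_iff₀ (exp_pos _)]
  exact this

lemma antitone_exp_neg_mul {α : Type*} [Preorder α] {f : α → ℝ} (hf : Monotone f) {t : ℝ}
    (ht : 0 ≤ t) : Antitone fun a => exp (-t * f a) := fun _ _ hab =>
  exp_le_exp.mpr (mul_le_mul_of_nonpos_left (hf hab) (neg_nonpos.mpr ht))

section Janson

variable {U ι : Type*} [DecidableEq U]

noncomputable def containedCount (s : Finset ι) (S : ι → Finset U) (A : Finset U) : ℝ :=
  ∑ i ∈ s, if S i ⊆ A then 1 else 0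

lemma containedCount_nonneg (s : Finset ι) (S : ι → Finset U) (A : Finset U) :
    0 ≤ containedCount s S A :=
  sum_nonneg fun _ _ => by positivity

lemma monotone_containedCount (s : Finset ι) (S : ι → Finset U) :
    Monotone (containedCount s S) := fun A B hAB =>
  sum_le_sum fun i _ => by
    by_cases h : S i ⊆ A
    · simp [h, h.trans hAB]
    · simp only [h, if_false]; positivity

lemma containedCount_union (s : Finset ι) (S : ι → Finset U) (A T : Finset U) :
    containedCount s S (A ∪ T) = containedCount s (fun i => S i \ T) A :=
  sum_congr rfl fun _ _ => if_congr sdiff_le_iff'.symm rfl rfl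

variable [Fintype U] {η : U → ℝ}

lemma bernoulliExpect_containedCount (s : Finset ι) (S : ι → Finset U) :
    bernoulliExpect η (containedCount s S) = ∑ i ∈ s, ∏ u ∈ S i, η u :=
  (bernoulliExpect_sum η s _).trans
    (sum_congr rfl fun i _ => bernoulliExpect_indicator_subset (S i))

variable [Fintype ι]

lemma mul_exp_mul_bernoulliExpect_le (hη : ∀ u, η u ∈ Set.Icc 0 1) (S : ι → Finset U)
    {t b : ℝ} (ht : 0 ≤ t) (i : ι)
    (hb : ∑ j with ¬Disjoint (S j) (S i), ∏ u ∈ S j \ S i, η u ≤ b) :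
    (∏ u ∈ S i, η u) * exp (-t * b) *
        bernoulliExpect η (fun A => exp (-t * containedCount univ S A)) ≤
      bernoulliExpect η (fun A => if S i ⊆ A then exp (-t * containedCount univ S A) else 0) := by
  set Y := containedCount {j | ¬Disjoint (S j) (S i)} S
  set Z := containedCount {j | Disjoint (S j) (S i)} S
  have hsplit : ∀ A, containedCount univ S A = Z A + Y A := fun A =>
    (sum_filter_add_sum_filter_not _ _ _).symm
  have hZ : ∀ A, Z (A ∪ S i) = Z A := fun A => by
    simp only [Z, containedCount_union]
    exact sum_congr rfl fun j hj => by
      simp only [sdiff_eq_self_of_disjoint (mem_filter.mp hj).2]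
  have hY : exp (-t * b) ≤ bernoulliExpect η (fun A => exp (-t * Y (A ∪ S i))) := by
    have hEY : bernoulliExpect η (fun A => Y (A ∪ S i)) ≤ b := by
      simp only [Y, containedCount_union]
      rwa [bernoulliExpect_containedCount]
    calc exp (-t * b) ≤ exp (-t * bernoulliExpect η (fun A => Y (A ∪ S i))) :=
          exp_le_exp.mpr (by nlinarith)
      _ ≤ _ := by rw [← bernoulliExpect_const_mul]; exact exp_bernoulliExpect_le hη _
  have hZX : bernoulliExpect η (fun A => exp (-t * containedCount univ S A)) ≤
      bernoulliExpect η (fun A => exp (-t * Z A)) :=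
    bernoulliExpect_mono hη fun A => by
      rw [hsplit]
      exact exp_le_exp.mpr (by nlinarith [show 0 ≤ Y A from containedCount_nonneg _ _ _])
  have hFKG := bernoulliExpect_mul_bernoulliExpect_le hη
    (f := fun A => exp (-t * Y (A ∪ S i))) (g := fun A => exp (-t * Z A))
    (fun _ => (exp_pos _).le) (fun _ => (exp_pos _).le)
    (antitone_exp_neg_mul (f := fun A => Y (A ∪ S i))
      ((monotone_containedCount _ S).comp fun _ _ h => union_subset_union h subset_rfl) ht)
    (antitone_exp_neg_mul (monotone_containedCount _ S) ht)
  have hηi : 0 ≤ ∏ u ∈ S i, η u := prod_nonneg fun u _ => (hη u).1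
  rw [bernoulliExpect_ite_subset, mul_assoc]
  calc (∏ u ∈ S i, η u) * (exp (-t * b) *
        bernoulliExpect η (fun A => exp (-t * containedCount univ S A)))
      ≤ (∏ u ∈ S i, η u) * (bernoulliExpect η (fun A => exp (-t * Y (A ∪ S i))) *
          bernoulliExpect η (fun A => exp (-t * Z A))) := by
        gcongr <;> exact bernoulliExpect_nonneg hη fun _ => (exp_pos _).le
    _ ≤ _ := by
        gcongr
        refine hFKG.trans (le_of_eq ?_)
        congr 1
        funext A
        rw [hsplit, hZ, ← exp_add, mul_add, add_comm]

lemma mul_exp_mul_bernoulliExpect_le_containedCount_mul (hη : ∀ u, η u ∈ Set.Icc 0 1)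
    (S : ι → Finset U) {t b : ℝ} (ht : 0 ≤ t)
    (hb : ∀ i, ∑ j with ¬Disjoint (S j) (S i), ∏ u ∈ S j \ S i, η u ≤ b) :
    (∑ i, ∏ u ∈ S i, η u) * exp (-t * b) *
        bernoulliExpect η (fun A => exp (-t * containedCount univ S A)) ≤
      bernoulliExpect η
        (fun A => containedCount univ S A * exp (-t * containedCount univ S A)) := by
  have hexpand : ∀ A, containedCount univ S A * exp (-t * containedCount univ S A) =
      ∑ i, if S i ⊆ A then exp (-t * containedCount univ S A) else 0 := fun A => by
    simp only [containedCount, sum_mul, boole_mul]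
  simp only [hexpand, bernoulliExpect_sum, sum_mul]
  exact sum_le_sum fun i _ => mul_exp_mul_bernoulliExpect_le hη S ht i (hb i)

lemma bernoulliExpect_exp_neg_mul_containedCount_le (hη : ∀ u, η u ∈ Set.Icc 0 1)
    (S : ι → Finset U) {b : ℝ} (hb₀ : 0 < b)
    (hb : ∀ i, ∑ j with ¬Disjoint (S j) (S i), ∏ u ∈ S j \ S i, η u ≤ b) {T : ℝ} (hT : 0 ≤ T) :
    bernoulliExpect η (fun A => exp (-T * containedCount univ S A)) ≤
      exp (-((∑ i, ∏ u ∈ S i, η u) / b * (1 - exp (-T * b)))) := by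
  set μ := ∑ i, ∏ u ∈ S i, η u
  set N := containedCount univ S
  have hψ : ∀ t, HasDerivAt (fun t => bernoulliExpect η (fun A => exp (-t * N A)))
      (-bernoulliExpect η (fun A => N A * exp (-t * N A))) t := fun t => by
    refine (hasDerivAt_bernoulliExpect fun A =>
      ((hasDerivAt_neg t).mul_const (N A)).exp).congr_deriv ?_
    rw [← bernoulliExpect_neg]
    congr 1; funext A; ring
  have hg : ∀ t, HasDerivAt (fun t => μ / b * (1 - exp (-t * b))) (μ * exp (-t * b)) t :=
    fun t => (((hasDerivAt_neg t).mul_const b).exp.const_sub 1).const_mul (μ / b)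
      |>.congr_deriv (by field_simp)
  have := le_mul_exp_sub_of_hasDerivAt hψ hg (fun t ht => by
    linarith [mul_exp_mul_bernoulliExpect_le_containedCount_mul hη S ht hb]) hT
  simpa [bernoulliExpect_const] using this

theorem janson (hη : ∀ u, η u ∈ Set.Icc 0 1) (S : ι → Finset U) {b : ℝ} (hb₀ : 0 < b)
    (hb : ∀ i, ∑ j with ¬Disjoint (S j) (S i), ∏ u ∈ S j \ S i, η u ≤ b) :
    bernoulliExpect η (fun A => if ∀ i, ¬S i ⊆ A then 1 else 0) ≤
      exp (-((∑ i, ∏ u ∈ S i, η u) / b)) := by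
  have hle : ∀ T, 0 ≤ T → bernoulliExpect η (fun A => if ∀ i, ¬S i ⊆ A then 1 else 0) ≤
      exp (-((∑ i, ∏ u ∈ S i, η u) / b * (1 - exp (-T * b)))) := fun T hT => by
    refine (bernoulliExpect_mono hη fun A => ?_).trans
      (bernoulliExpect_exp_neg_mul_containedCount_le hη S hb₀ hb hT)
    split_ifs with h
    · simp [containedCount, h]
    · exact (exp_pos _).le
  have hlim : Tendsto (fun T => exp (-((∑ i, ∏ u ∈ S i, η u) / b * (1 - exp (-T * b)))))
      atTop (𝓝 (exp (-((∑ i, ∏ u ∈ S i, η u) / b)))) := by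
    have h : Tendsto (fun T => exp (-T * b)) atTop (𝓝 0) := by
      simpa [Function.comp_def, neg_mul] using
        tendsto_exp_neg_atTop_nhds_zero.comp (tendsto_id.atTop_mul_const hb₀)
    simpa using (((h.const_sub 1).const_mul ((∑ i, ∏ u ∈ S i, η u) / b)).neg).rexp
  exact ge_of_tendsto hlim (eventually_ge_atTop 0 |>.mono hle)

end Janson

lemma one_add_pow_sub_one_le {x : ℝ} (hx : 0 ≤ x) {r : ℕ} (h : ((r : ℝ) - 1) * x ≤ log 2) :
    (1 + x) ^ r - 1 ≤ 2 * r * x := by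
  have hterm : ∀ k ∈ range r, (1 + x) ^ k ≤ 2 := fun k hk => by
    have hk : (k : ℝ) ≤ r - 1 := by
      have := mem_range.mp hk
      rw [le_sub_iff_add_le]; exact_mod_cast this
    calc (1 + x) ^ k ≤ exp x ^ k := by gcongr; linarith [add_one_le_exp x]
      _ = exp (k * x) := (exp_nat_mul x k).symm
      _ ≤ exp (log 2) := exp_le_exp.mpr (by nlinarith)
      _ = 2 := exp_log two_pos
  rw [← geom_sum_mul, add_sub_cancel_left]
  calc (∑ k ∈ range r, (1 + x) ^ k) * x ≤ (r * 2) * x := by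
        gcongr
        simpa using sum_le_card_nsmul _ _ _ hterm
    _ = 2 * r * x := by ring

lemma div_two_mul_le_pow_div_add_inv_pow_sub_pow {p κ : ℝ} (hp : 0 < p) (hκ : 0 < κ) {r : ℕ}
    (hr : 1 ≤ r) (h : ((r : ℝ) - 1) / log 2 ≤ p * κ) :
    p * κ / (2 * r) ≤ p ^ r / ((p + κ⁻¹) ^ r - p ^ r) := by
  set x := (p * κ)⁻¹
  have hpκ : 0 < p * κ := by positivity
  have hx : ((r : ℝ) - 1) * x ≤ log 2 := by
    rw [div_le_iff₀ (log_pos one_lt_two)] at h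
    rw [← div_eq_mul_inv, div_le_iff₀ hpκ]; linarith
  have hpow : (p + κ⁻¹) ^ r - p ^ r = p ^ r * ((1 + x) ^ r - 1) := by
    rw [mul_sub, mul_one, ← mul_pow]; congr 2; simp only [x]; field_simp
  have hgrowth : 0 < (1 + x) ^ r - 1 :=
    sub_pos.mpr (one_lt_pow₀ (by simp [x]; positivity) (by omega))
  have hD : p * κ * ((1 + x) ^ r - 1) ≤ 2 * r :=
    calc p * κ * ((1 + x) ^ r - 1) ≤ p * κ * (2 * r * x) := by
          gcongr; exact one_add_pow_sub_one_le (by positivity) hx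
      _ = 2 * r := by simp only [x]; field_simp
  rw [hpow, div_mul_cancel_left₀ (by positivity), ← one_div,
    div_le_div_iff₀ (by positivity) hgrowth]
  linarith

section Spread

variable {U ι : Type*} [DecidableEq U] [Fintype ι]

def IsSpread (S : ι → Finset U) (κ : ℝ) : Prop :=
  ∀ W : Finset U, (#{i | W ⊆ S i} : ℝ) ≤ Fintype.card ι / κ ^ #W

lemma IsSpread.sum_pow_card_sdiff_le {S : ι → Finset U} {κ : ℝ} (hS : IsSpread S κ) {r : ℕ}
    (hcard : ∀ i, #(S i) = r) {p : ℝ} (hp : 0 ≤ p) (i : ι) :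
    ∑ j with ¬Disjoint (S j) (S i), p ^ #(S j \ S i) ≤
      Fintype.card ι * ((p + κ⁻¹) ^ r - p ^ r) := by
  set P := (S i).powerset.erase ∅
  have hmaps : ∀ j ∈ ({j | ¬Disjoint (S j) (S i)} : Finset ι), S i ∩ S j ∈ P := fun j hj => by
    simp only [P, mem_erase, mem_powerset, ← nonempty_iff_ne_empty]
    exact ⟨not_disjoint_iff_nonempty_inter.mp (by simpa [disjoint_comm] using hj),
      inter_subset_left⟩
  have hbinom : ∑ W ∈ (S i).powerset, κ⁻¹ ^ #W * p ^ (r - #W) = (κ⁻¹ + p) ^ r := by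
    simpa [hcard i] using sum_pow_mul_eq_add_pow κ⁻¹ p (S i)
  calc ∑ j with ¬Disjoint (S j) (S i), p ^ #(S j \ S i)
      = ∑ W ∈ P, ∑ j with ¬Disjoint (S j) (S i) ∧ S i ∩ S j = W, p ^ (r - #W) := by
        rw [← sum_fiberwise_of_maps_to hmaps]
        refine sum_congr rfl fun W _ => ?_
        rw [filter_filter]
        refine sum_congr rfl fun j hj => ?_
        rw [card_sdiff, hcard j, (mem_filter.mp hj).2.2]
    _ ≤ ∑ W ∈ P, (#{j | W ⊆ S j} : ℝ) * p ^ (r - #W) := by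
        refine sum_le_sum fun W _ => ?_
        rw [sum_const, nsmul_eq_mul]
        gcongr with j
        rintro ⟨-, rfl⟩
        exact inter_subset_right
    _ ≤ ∑ W ∈ P, Fintype.card ι * (κ⁻¹ ^ #W * p ^ (r - #W)) := by
        refine sum_le_sum fun W _ => ?_
        rw [inv_pow, ← mul_assoc, ← div_eq_mul_inv]
        exact mul_le_mul_of_nonneg_right (hS W) (by positivity)
    _ = Fintype.card ι * ((p + κ⁻¹) ^ r - p ^ r) := by
        rw [← mul_sum, sum_erase_eq_sub (empty_mem_powerset _), hbinom, add_comm]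
        simp

end Spread

/-- spread lemma via Janson's inequality: if `S_1,…,S_l` are `r`-sets that
are `κ`-spread over a finite set `U`, `W` includes each element of `U` independently with
probability `p ∈ (0,1)`, and `pκ ≥ (r-1)/ln 2`, then the probability that no `S_i` is
contained in `W` is at most `exp(-pκ/(2r))`. -/
theorem stmt_5 (U : Type) [Fintype U] [DecidableEq U] (l r : ℕ) (hl : 1 ≤ l) (hr : 1 ≤ r)
    (S : Fin l → Finset U) (hcard : ∀ i, (S i).card = r)
    (κ : ℝ) (hκ : 1 ≤ κ)
    (hspread : ∀ W : Finset U,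
      ((Finset.univ.filter fun i : Fin l => W ⊆ S i).card : ℝ) ≤ (l : ℝ) / κ ^ W.card)
    (p : ℝ) (hp0 : 0 < p) (hp1 : p < 1)
    (hpκ : ((r : ℝ) - 1) / Real.log 2 ≤ p * κ) :
    ∑ f : U → Bool,
        (if ∀ i : Fin l, ∃ u ∈ S i, f u = false then
          ∏ u : U, (if f u then p else 1 - p) else 0)
      ≤ Real.exp (-(p * κ) / (2 * r)) := by
  have hS : IsSpread S κ := fun W => by simpa using hspread W
  have hκ₀ : 0 < κ := by linarith
  have hl₀ : (0 : ℝ) < l := by exact_mod_cast hl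
  have hgap : 0 < (p + κ⁻¹) ^ r - p ^ r :=
    sub_pos.mpr (pow_lt_pow_left₀ (by simpa) hp0.le (by omega))
  calc _ = bernoulliExpect (fun _ => p) (fun A => if ∀ i, ¬S i ⊆ A then 1 else 0) := by
        rw [← sum_bool_eq_bernoulliExpect]
        exact sum_congr rfl fun f _ => by simp [not_subset]
    _ ≤ exp (-((∑ i, ∏ u ∈ S i, p) / (l * ((p + κ⁻¹) ^ r - p ^ r)))) := by
        convert janson (fun _ => ⟨hp0.le, hp1.le⟩) S (b := l * ((p + κ⁻¹) ^ r - p ^ r))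
          (by positivity) fun i => by
          simpa using hS.sum_pow_card_sdiff_le hcard hp0.le i
    _ ≤ exp (-(p * κ) / (2 * r)) := by
        rw [exp_le_exp, neg_div, neg_le_neg_iff]
        simpa [hcard, mul_div_mul_left _ _ hl₀.ne'] using
          div_two_mul_le_pow_div_add_inv_pow_sub_pow hp0 hκ₀ hr hpκ
end

section
/- Let m ≥ 2 be an integer and r ≥ w ≥ 0 integers. Then the sum over i from w to r of C(r, i) · (1/m)^i · ((1 - 1/m)/2)^{r-i} is at most (2/(m+1))^w. -/
/-! Tilting the binomial distribution by `λ = (m + 1) / 2` turns the weights `(1/m, (1 - 1/m)/2)`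
into `(λ/m, (1 - 1/m)/2)`, which sum to `1`. Every term of the tail `i ≥ w` gains a factor
`λ^i ≥ λ^w`, so `λ^w` times the tail is at most the full tilted binomial sum, which is `1`. -/

open Finset

theorem pow_mul_sum_Icc_choose_mul_pow_le {p q c : ℝ} (hp : 0 ≤ p) (hq : 0 ≤ q) (hc : 1 ≤ c)
    (w r : ℕ) :
    c ^ w * ∑ i ∈ Icc w r, (r.choose i : ℝ) * p ^ i * q ^ (r - i) ≤ (c * p + q) ^ r := by
  have hcp : 0 ≤ c * p := mul_nonneg (zero_le_one.trans hc) hp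
  calc c ^ w * ∑ i ∈ Icc w r, (r.choose i : ℝ) * p ^ i * q ^ (r - i)
      ≤ ∑ i ∈ Icc w r, (c * p) ^ i * q ^ (r - i) * (r.choose i : ℝ) := by
        rw [mul_sum]
        refine sum_le_sum fun i hi => ?_
        have hci : c ^ w ≤ c ^ i := pow_le_pow_right₀ hc (mem_Icc.mp hi).1
        calc c ^ w * ((r.choose i : ℝ) * p ^ i * q ^ (r - i))
            ≤ c ^ i * ((r.choose i : ℝ) * p ^ i * q ^ (r - i)) := by gcongr
          _ = (c * p) ^ i * q ^ (r - i) * (r.choose i : ℝ) := by ring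
    _ ≤ ∑ i ∈ range (r + 1), (c * p) ^ i * q ^ (r - i) * (r.choose i : ℝ) :=
        sum_le_sum_of_subset_of_nonneg
          (fun i hi => mem_range.mpr (Nat.lt_succ_of_le (mem_Icc.mp hi).2))
          (fun i _ _ => by positivity)
    _ = (c * p + q) ^ r := (add_pow _ _ _).symm

theorem stmt_6_general (m r w : ℕ) (hm : 2 ≤ m) :
    ∑ i ∈ Finset.Icc w r,
        (r.choose i : ℝ) * (1 / (m : ℝ)) ^ i * ((1 - 1 / (m : ℝ)) / 2) ^ (r - i)
      ≤ (2 / ((m : ℝ) + 1)) ^ w := by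
  have hm' : (2 : ℝ) ≤ m := by exact_mod_cast hm
  have hq : 0 ≤ (1 - 1 / (m : ℝ)) / 2 := by
    have : 1 / (m : ℝ) ≤ 1 := (div_le_one (by linarith)).mpr (by linarith)
    linarith
  have htilt : ((m : ℝ) + 1) / 2 * (1 / m) + (1 - 1 / (m : ℝ)) / 2 = 1 := by
    field_simp
    ring
  have key := pow_mul_sum_Icc_choose_mul_pow_le (p := 1 / (m : ℝ)) (by positivity) hq
    (show (1 : ℝ) ≤ ((m : ℝ) + 1) / 2 by linarith) w r
  rw [htilt, one_pow, ← le_div_iff₀' (by positivity), ← one_div_pow, one_div_div] at key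
  exact key

/-- the binomial tail bound
`Σ_{i=w}^r C(r,i)(1/m)^i((1-1/m)/2)^{r-i} ≤ (2/(m+1))^w` for `m ≥ 2` and `0 ≤ w ≤ r`. -/
theorem stmt_6 (m r w : ℕ) (hm : 2 ≤ m) (hw : w ≤ r) :
    ∑ i ∈ Finset.Icc w r,
        (r.choose i : ℝ) * (1 / (m : ℝ)) ^ i * ((1 - 1 / (m : ℝ)) / 2) ^ (r - i)
      ≤ (2 / ((m : ℝ) + 1)) ^ w :=
  stmt_6_general m r w hm
end

section
/- Let ξ_1, …, ξ_l be indicator random variables with ξ_i the indicator that S_i ⊆ W, where each S_i ⊆ U has size r, the family (S_1,…,S_l) is κ-spread over U, and W includes each element of U independently with probability p ∈ (0,1). Let μ = Σ_i E[ξ_i] = l·p^r and Λ = Σ_{(i,j): S_i ∩ S_j ≠ ∅} E[ξ_i ξ_j]. Then Λ ≤ μ² · ((1 + 1/(pκ))^r - 1). -/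
/-!
Group the pairs `(i, j)` by the trace `T = S i ∩ S j ⊆ S i`. For a fixed nonempty `T`, spreadness
allows at most `l / κ ^ |T|` indices `j` with `T ⊆ S j`, each contributing `p ^ (2r - |T|)`. Hence
each row is at most `l p ^ (2r) ∑_{∅ ≠ T ⊆ S i} (1 / (p κ)) ^ |T| = l p ^ (2r) ((1 + 1 / (p κ)) ^ r - 1)`,
and summing the `l` rows gives the bound.
-/

open Finset

variable {U ι : Type*} [DecidableEq U]

theorem Finset.sum_powerset_erase_empty_pow_card {R : Type*} [CommRing R] (s : Finset U) (x : R) :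
    ∑ T ∈ s.powerset.erase ∅, x ^ #T = (1 + x) ^ #s - 1 := by
  rw [sum_erase_eq_sub (empty_mem_powerset s), add_comm, ← sum_pow_mul_eq_add_pow x 1 s]
  simp

theorem sum_ite_inter_nonempty_le [Fintype ι] (s : Finset U) (S : ι → Finset U) (b f : ℕ → ℝ)
    (hb : ∀ T : Finset U, (#{j | T ⊆ S j} : ℝ) ≤ b #T) (hf : ∀ k, 0 ≤ f k) :
    ∑ j, (if (s ∩ S j).Nonempty then f #(s ∩ S j) else 0)
      ≤ ∑ T ∈ s.powerset.erase ∅, b #T * f #T := by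
  have hmaps : ∀ j ∈ ({j | (s ∩ S j).Nonempty} : Finset ι), s ∩ S j ∈ s.powerset.erase ∅ := by
    intro j hj
    simp only [mem_filter, mem_univ, true_and] at hj
    exact mem_erase.2 ⟨hj.ne_empty, mem_powerset.2 inter_subset_left⟩
  rw [← sum_filter, ← sum_fiberwise_of_maps_to hmaps]
  refine sum_le_sum fun T _ => ?_
  have hfibre : ({j ∈ {j | (s ∩ S j).Nonempty} | s ∩ S j = T} : Finset ι) ⊆ ({j | T ⊆ S j} : Finset ι) := by
    intro j hj
    simp only [mem_filter, mem_univ, true_and] at hj ⊢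
    exact hj.2 ▸ inter_subset_right
  calc ∑ j ∈ {j ∈ {j | (s ∩ S j).Nonempty} | s ∩ S j = T}, f #(s ∩ S j)
      = #{j ∈ {j | (s ∩ S j).Nonempty} | s ∩ S j = T} * f #T := by
        rw [sum_congr rfl fun j hj => by rw [(mem_filter.1 hj).2], sum_const, nsmul_eq_mul]
    _ ≤ b #T * f #T :=
        mul_le_mul_of_nonneg_right ((Nat.cast_le.2 (card_le_card hfibre)).trans (hb T)) (hf _)

theorem div_pow_mul_pow_sub {L κ p : ℝ} (hκ : κ ≠ 0) (hp : p ≠ 0) {k n : ℕ} (hkn : k ≤ n) :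
    L / κ ^ k * p ^ (n - k) = L * p ^ n * (1 / (p * κ)) ^ k := by
  rw [pow_sub₀ p hp hkn, one_div, inv_pow, mul_pow]
  field_simp

theorem sum_ite_inter_nonempty_le_of_spread [Fintype ι] (s : Finset U) (S : ι → Finset U)
    {L κ p : ℝ} (hκ : 0 < κ) (hp : 0 < p)
    (hspread : ∀ T : Finset U, (#{j | T ⊆ S j} : ℝ) ≤ L / κ ^ #T) {n : ℕ} (hsn : #s ≤ n) :
    ∑ j, (if (s ∩ S j).Nonempty then p ^ (n - #(s ∩ S j)) else 0)
      ≤ L * p ^ n * ((1 + 1 / (p * κ)) ^ #s - 1) := by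
  calc _ ≤ ∑ T ∈ s.powerset.erase ∅, L / κ ^ #T * p ^ (n - #T) :=
        sum_ite_inter_nonempty_le s S (fun k => L / κ ^ k) (fun k => p ^ (n - k)) hspread fun k => (pow_pos hp _).le
    _ = ∑ T ∈ s.powerset.erase ∅, L * p ^ n * (1 / (p * κ)) ^ #T := by
        refine sum_congr rfl fun T hT => div_pow_mul_pow_sub hκ.ne' hp.ne' ?_
        exact (card_le_card (mem_powerset.1 (mem_of_mem_erase hT))).trans hsn
    _ = L * p ^ n * ((1 + 1 / (p * κ)) ^ #s - 1) := by
        rw [← mul_sum, sum_powerset_erase_empty_pow_card]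

theorem stmt_7_general (U : Type) [DecidableEq U] (l r : ℕ)
    (S : Fin l → Finset U) (hcard : ∀ i, (S i).card = r)
    (κ : ℝ) (hκ : 1 ≤ κ)
    (hspread : ∀ W : Finset U,
      ((Finset.univ.filter fun i : Fin l => W ⊆ S i).card : ℝ) ≤ (l : ℝ) / κ ^ W.card)
    (p : ℝ) (hp0 : 0 < p) :
    ∑ i : Fin l, ∑ j : Fin l,
        (if (S i ∩ S j).Nonempty then p ^ (2 * r - (S i ∩ S j).card) else 0)
      ≤ ((l : ℝ) * p ^ r) ^ 2 * ((1 + 1 / (p * κ)) ^ r - 1) := by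
  have hrow : ∀ i, ∑ j : Fin l,
      (if (S i ∩ S j).Nonempty then p ^ (2 * r - (S i ∩ S j).card) else 0)
        ≤ l * p ^ (2 * r) * ((1 + 1 / (p * κ)) ^ r - 1) := fun i => by
    simpa only [hcard i] using sum_ite_inter_nonempty_le_of_spread (S i) S
      (one_pos.trans_le hκ) hp0 hspread (n := 2 * r) (by rw [hcard i]; omega)
  calc _ ≤ ∑ _i : Fin l, l * p ^ (2 * r) * ((1 + 1 / (p * κ)) ^ r - 1) :=
        sum_le_sum fun i _ => hrow i
    _ = ((l : ℝ) * p ^ r) ^ 2 * ((1 + 1 / (p * κ)) ^ r - 1) := by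
        rw [sum_const, card_univ, Fintype.card_fin, nsmul_eq_mul]
        ring

/-- the correlation bound in the Janson-inequality argument. With
`ξ_i` the indicator that the `r`-set `S_i` is contained in the `p`-random subset `W`,
`E[ξ_i ξ_j] = p^{2r - |S_i ∩ S_j|}`, `μ = l·p^r`, and the family `κ`-spread,
`Λ = Σ_{(i,j): S_i ∩ S_j ≠ ∅} E[ξ_i ξ_j] ≤ μ²((1 + 1/(pκ))^r - 1)`. -/
theorem stmt_7 (U : Type) [Fintype U] [DecidableEq U] (l r : ℕ)
    (S : Fin l → Finset U) (hcard : ∀ i, (S i).card = r)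
    (κ : ℝ) (hκ : 1 ≤ κ)
    (hspread : ∀ W : Finset U,
      ((Finset.univ.filter fun i : Fin l => W ⊆ S i).card : ℝ) ≤ (l : ℝ) / κ ^ W.card)
    (p : ℝ) (hp0 : 0 < p) (hp1 : p < 1) :
    ∑ i : Fin l, ∑ j : Fin l,
        (if (S i ∩ S j).Nonempty then p ^ (2 * r - (S i ∩ S j).card) else 0)
      ≤ ((l : ℝ) * p ^ r) ^ 2 * ((1 + 1 / (p * κ)) ^ r - 1) :=
  stmt_7_general U l r S hcard κ hκ hspread p hp0
end

section
/- Let G be the k × (L + 2r) cylinder graph (vertex set [k] × [L+2r], with vertices (i,a) and (i',a') adjacent iff either a = a' and i - i' ≡ ±1 (mod k), or i = i' and |a - a'| = 1). Suppose S is a subset of vertices that is a minimal (with respect to set inclusion) vertex separator between column 1 and column L+2r, i.e., removing S disconnects column 1 from column L+2r, but removing any proper subset of S does not. Then the difference between the maximum and minimum column indices of vertices in S is at most |S| - 1. -/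
/-- The `k × N` cylinder graph: vertices `(i,a) ∈ ZMod k × Fin N`; `(i,a)` and `(i',a')`
are adjacent iff they are distinct and either they are in the same column with
`i - i' ≡ ±1 (mod k)`, or in the same row with `|a - a'| = 1`. -/
def cylinderGraph (k N : ℕ) : SimpleGraph (ZMod k × Fin N) where
  Adj v w := v ≠ w ∧
    ((v.2 = w.2 ∧ (v.1 = w.1 + 1 ∨ w.1 = v.1 + 1)) ∨
     (v.1 = w.1 ∧ ((v.2 : ℕ) + 1 = (w.2 : ℕ) ∨ (w.2 : ℕ) + 1 = (v.2 : ℕ))))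
  symm := by
    constructor
    rintro v w ⟨hne, h | h⟩
    · exact ⟨hne.symm, Or.inl ⟨h.1.symm, h.2.symm⟩⟩
    · exact ⟨hne.symm, Or.inr ⟨h.1.symm, h.2.symm⟩⟩
  loopless := by constructor; rintro v ⟨hne, -⟩; exact hne rfl

/-- `S` is a vertex separator between the first and the last column of the cylinder:
every walk from a vertex in column `1` (index `0`) to a vertex in column `N`
(index `N-1`) meets `S`. -/
def SeparatesEnds (k N : ℕ) (S : Set (ZMod k × Fin N)) : Prop :=
  ∀ u v : ZMod k × Fin N, (u.2 : ℕ) = 0 → (v.2 : ℕ) = N - 1 →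
    ∀ p : (cylinderGraph k N).Walk u v, ∃ x ∈ p.support, x ∈ S

/-!
If a column `c` strictly between two columns of a separator `S` contained no vertex of `S`,
then the part of `S` left of `c` or the part right of `c` would already separate: otherwise a
walk from the first column avoiding the left part reaches column `c` without meeting `S`, a
walk to the last column avoiding the right part leaves column `c` without meeting `S`, and the
two can be joined inside the cycle at column `c`. So a minimal separator meets every column
between its extreme columns, which gives `diam S + 1 ≤ |S|`.
-/

namespace SimpleGraph.Walk

variable {V : Type*} {G : SimpleGraph V}

-- Discrete intermediate value theorem along a walk.
theorem exists_walk_to_level {f : V → ℤ} (hf : ∀ x y, G.Adj x y → f y ≤ f x + 1) {c : ℤ} :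
    ∀ {u v : V} (p : G.Walk u v), f u ≤ c → c ≤ f v →
      ∃ w, f w = c ∧ ∃ q : G.Walk u w, ∀ x ∈ q.support, x ∈ p.support ∧ f x ≤ c
  | u, _, nil, hu, hv => ⟨u, le_antisymm hu hv, nil, fun x hx => ⟨hx, by simp_all⟩⟩
  | u, _, cons h p, hu, hv => by
    rcases hu.eq_or_lt with hu | hu
    · exact ⟨u, hu, nil, fun x hx => ⟨by simp_all, by simp_all⟩⟩
    obtain ⟨w, hw, q, hq⟩ := exists_walk_to_level hf p (by linarith [hf _ _ h]) hv
    refine ⟨w, hw, cons h q, ?_⟩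
    simp only [support_cons, List.mem_cons, forall_eq_or_imp]
    exact ⟨⟨by simp, hu.le⟩, fun x hx => ⟨.inr (hq x hx).1, (hq x hx).2⟩⟩

end SimpleGraph.Walk

open SimpleGraph

namespace cylinderGraph

variable {k N : ℕ}

theorem col_le_col_add_one {u w : ZMod k × Fin N} (h : (cylinderGraph k N).Adj u w) :
    (w.2 : ℤ) ≤ u.2 + 1 := by
  rcases h with ⟨-, ⟨h, -⟩ | ⟨-, h | h⟩⟩ <;> omega

theorem exists_walk_in_column {u w : ZMod k × Fin N} (huw : u.2 = w.2) :
    ∃ q : (cylinderGraph k N).Walk u w, ∀ x ∈ q.support, x.2 = u.2 := by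
  obtain ⟨i, a⟩ := u
  obtain ⟨j, b⟩ := w
  obtain rfl : a = b := huw
  let v (i : ZMod k) : {x : ZMod k × Fin N | x.2 = a} := ⟨(i, a), rfl⟩
  have step (i : ZMod k) :
      ((cylinderGraph k N).induce {x | x.2 = a}).Reachable (v i) (v (i + 1)) := by
    by_cases h1 : (1 : ZMod k) = 0
    · simp [h1]
    exact Adj.reachable
      ⟨fun h => h1 (by simpa [v] using congrArg Prod.fst h), .inl ⟨rfl, .inr rfl⟩⟩
  have reach (z : ℤ) :
      ((cylinderGraph k N).induce {x | x.2 = a}).Reachable (v i) (v (i + z)) := by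
    induction z using Int.induction_on with
    | zero => simp
    | succ z ih => simpa [add_assoc] using ih.trans (step _)
    | pred z ih =>
      have back := (step (i + ((-z - 1 : ℤ) : ZMod k))).symm
      rw [show i + ((-z - 1 : ℤ) : ZMod k) + 1 = i + ((-z : ℤ) : ZMod k) by push_cast; ring] at back
      exact ih.trans back
  obtain ⟨q⟩ := reach (ZMod.cast (j - i))
  rw [ZMod.intCast_zmod_cast, add_sub_cancel] at q
  refine ⟨q.map (Embedding.induce _).toHom, fun x hx => ?_⟩
  obtain ⟨y, -, rfl⟩ := List.mem_map.mp (by rw [← Walk.support_map]; exact hx)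
  exact y.2

end cylinderGraph

variable {k N : ℕ}

theorem SeparatesEnds.left_or_right_of_avoids_column {S : Set (ZMod k × Fin N)}
    (hS : SeparatesEnds k N S) {c : ℕ} (hc : c < N) (hSc : ∀ x ∈ S, (x.2 : ℕ) ≠ c) :
    SeparatesEnds k N {x | x ∈ S ∧ (x.2 : ℕ) < c} ∨
      SeparatesEnds k N {x | x ∈ S ∧ c < (x.2 : ℕ)} := by
  by_contra! h
  obtain ⟨hl, hr⟩ := h
  simp only [SeparatesEnds, not_forall, not_exists, Set.mem_ofPred_eq, not_and, not_lt] at hl hr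
  obtain ⟨u, v₁, hu, hv, p, hp⟩ := hl
  obtain ⟨u₂, v, hu₂, hv', p', hp'⟩ := hr
  obtain ⟨w, hw, q, hq⟩ := Walk.exists_walk_to_level (p := p) (f := fun x => (x.2 : ℤ))
    (c := c) (fun _ _ h => cylinderGraph.col_le_col_add_one h) (by simp [hu]) (by simp [hv]; omega)
  obtain ⟨w', hw', q', hq'⟩ := Walk.exists_walk_to_level (p := p'.reverse)
    (f := fun x => -(x.2 : ℤ)) (c := -c)
    (fun _ _ h => by linarith [cylinderGraph.col_le_col_add_one h.symm])
    (by simp [hv']; omega) (by simp [hu₂])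
  obtain ⟨qc, hqc⟩ := cylinderGraph.exists_walk_in_column (u := w) (w := w')
    (by ext; simp at hw hw'; omega)
  obtain ⟨x, hx, hxS⟩ := hS u v hu hv' (q.append (qc.append q'.reverse))
  simp only [Walk.mem_support_append_iff, Walk.support_reverse, List.mem_reverse] at hx
  rcases hx with hx | hx | hx
  · have := hp x (hq x hx).1 hxS
    have := (hq x hx).2
    have := hSc x hxS
    omega
  · have := congrArg Fin.val (hqc x hx)
    have := hSc x hxS
    omega
  · have := hp' x (by simpa using (hq' x hx).1) hxS
    have := (hq' x hx).2
    have := hSc x hxS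
    omega

theorem SeparatesEnds.exists_mem_column_of_minimal {S : Finset (ZMod k × Fin N)}
    (hsep : SeparatesEnds k N ↑S)
    (hmin : ∀ S' : Finset (ZMod k × Fin N), S' ⊂ S → ¬ SeparatesEnds k N ↑S')
    {s t : ZMod k × Fin N} (hs : s ∈ S) (ht : t ∈ S) {c : ℕ} (hsc : (s.2 : ℕ) < c)
    (hct : c < (t.2 : ℕ)) : ∃ x ∈ S, (x.2 : ℕ) = c := by
  by_contra! hSc
  rcases hsep.left_or_right_of_avoids_column (by omega) hSc with h | h
  · exact hmin (S.filter fun x => (x.2 : ℕ) < c)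
      (Finset.filter_ssubset.mpr ⟨t, ht, by omega⟩) (by simpa [Finset.coe_filter] using h)
  · exact hmin (S.filter fun x => c < (x.2 : ℕ))
      (Finset.filter_ssubset.mpr ⟨s, hs, by omega⟩) (by simpa [Finset.coe_filter] using h)

theorem stmt_9_general (k L r : ℕ)
    (S : Finset (ZMod k × Fin (L + 2 * r)))
    (hsep : SeparatesEnds k (L + 2 * r) ↑S)
    (hmin : ∀ S' : Finset (ZMod k × Fin (L + 2 * r)),
      S' ⊂ S → ¬ SeparatesEnds k (L + 2 * r) ↑S') :
    ∀ u ∈ S, ∀ v ∈ S, (u.2 : ℕ) ≤ (v.2 : ℕ) + (S.card - 1) := by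
  intro u hu v hv
  have hcover : Finset.Icc (v.2 : ℕ) u.2 ⊆ S.image fun x => (x.2 : ℕ) := by
    intro c hc
    rw [Finset.mem_Icc] at hc
    rw [Finset.mem_image]
    rcases hc.1.eq_or_lt with rfl | hvc
    · exact ⟨v, hv, rfl⟩
    rcases hc.2.eq_or_lt with rfl | hcu
    · exact ⟨u, hu, rfl⟩
    exact hsep.exists_mem_column_of_minimal hmin hv hu hvc hcu
  have := (Finset.card_le_card hcover).trans Finset.card_image_le
  rw [Nat.card_Icc] at this
  omega

/-- a minimal vertex separator `S` between the first and last column of the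
`k × (L+2r)` cylinder has column-diameter at most `|S| - 1`: for all `u, v ∈ S`,
`col(u) ≤ col(v) + (|S| - 1)`. -/
theorem stmt_9 (k L r : ℕ) (hk : 2 ≤ k)
    (S : Finset (ZMod k × Fin (L + 2 * r)))
    (hsep : SeparatesEnds k (L + 2 * r) ↑S)
    (hmin : ∀ S' : Finset (ZMod k × Fin (L + 2 * r)),
      S' ⊂ S → ¬ SeparatesEnds k (L + 2 * r) ↑S') :
    ∀ u ∈ S, ∀ v ∈ S, (u.2 : ℕ) ≤ (v.2 : ℕ) + (S.card - 1) :=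
  stmt_9_general k L r S hsep hmin
end

section
/- Let ℛ ⊆ {0,1}^n × O be a total search problem (for every x there exists o with (x,o) ∈ ℛ), let m ≥ 2, and define the composed search problem ℛ ∘ XOR_m^n ⊆ ({0,1}^{m})^n × O by ((y_1,…,y_n), o) ∈ ℛ ∘ XOR_m^n iff (z, o) ∈ ℛ where z_i = y_{i,1} ⊕ ⋯ ⊕ y_{i,m}. If there is a decision tree of width w and size s solving ℛ ∘ XOR_m^n, then there is a decision tree of width at most w/(m-1) and depth at most log₂ s solving ℛ. -/
/-- Decision trees for total search problems over Boolean variables indexed by `V`: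
each node carries a partial assignment (its `ρ`), internal nodes query a variable. -/
inductive DTree (V O : Type) where
  | leaf (ρ : V → Option Bool) (o : O)
  | node (ρ : V → Option Bool) (q : V) (t0 : DTree V O) (t1 : DTree V O)

namespace DTree

variable {V O : Type}

/-- The partial assignment at the root node of a tree. -/
def rho : DTree V O → (V → Option Bool)
  | leaf ρ _ => ρ
  | node ρ _ _ _ => ρ

/-- Number of nodes. -/
def size : DTree V O → ℕ
  | leaf _ _ => 1
  | node _ _ t0 t1 => 1 + t0.size + t1.size

/-- Length of the longest root-to-leaf path. -/
def depth : DTree V O → ℕ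
  | leaf _ _ => 0
  | node _ _ t0 t1 => 1 + max t0.depth t1.depth

/-- Maximum number of fixed variables in any node's partial assignment. -/
def width [Fintype V] [DecidableEq V] : DTree V O → ℕ
  | leaf ρ _ => (Finset.univ.filter fun v => (ρ v).isSome).card
  | node ρ _ t0 t1 =>
      max ((Finset.univ.filter fun v => (ρ v).isSome).card) (max t0.width t1.width)

/-- `x` extends the partial assignment `ρ`. -/
def Extends (ρ : V → Option Bool) (x : V → Bool) : Prop :=
  ∀ v b, ρ v = some b → x v = b

/-- Consistency condition between a node's assignment `ρ` (querying `q`) and the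
assignment `ρ'` of its `bit`-child: the child may record the answer `bit` at `q` or
forget it, and elsewhere agrees with `ρ` or forgets. -/
def ChildOk (ρ : V → Option Bool) (q : V) (bit : Bool) (ρ' : V → Option Bool) : Prop :=
  (ρ' q = some bit ∨ ρ' q = none) ∧ ∀ v, v ≠ q → (ρ' v = ρ v ∨ ρ' v = none)

/-- Structural correctness of a decision tree for the search problem `Rel`. -/
def Ok (Rel : (V → Bool) → O → Prop) : DTree V O → Prop
  | leaf ρ o => ∀ x : V → Bool, Extends ρ x → Rel x o
  | node ρ q t0 t1 =>
      ρ q = none ∧ ChildOk ρ q false t0.rho ∧ ChildOk ρ q true t1.rho ∧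
        Ok Rel t0 ∧ Ok Rel t1

/-- The decision tree solves `Rel`: it is structurally correct and its root carries
the empty partial assignment. -/
def Solves (Rel : (V → Bool) → O → Prop) (T : DTree V O) : Prop :=
  Ok Rel T ∧ T.rho = fun _ => none

end DTree

/-!
The tree for `Rel` simulates `T`, keeping a partial assignment `α` to the XOR values `z`.
A query to a variable of block `i` is answered freely as long as at most `m - 2` variables of
the block are fixed; the simulation then follows the smaller subtree, which at least halves the
size. Once `m - 1` variables of block `i` are fixed, the last one determines the XOR, so the
simulation queries `z i` (unless `α` already knows it) and answers so that the block's XOR is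
`z i`. The value `z i` is remembered only while block `i` keeps `m - 1` fixed variables, which
gives the width bound. Each query of some `z i` is paid for by a free step that made block `i`
nearly full, so `2 ^ depth ≤ 2 ^ #unresolved * size` is an invariant, and at the root no block
is unresolved.
-/

namespace XorLift

open Finset DTree

section Assignments

variable {V : Type}

def IsSubassignment (ρ' ρ : V → Option Bool) : Prop :=
  ∀ v, ρ' v = ρ v ∨ ρ' v = none

theorem IsSubassignment.trans {ρ'' ρ' ρ : V → Option Bool} (h₁ : IsSubassignment ρ'' ρ')
    (h₂ : IsSubassignment ρ' ρ) : IsSubassignment ρ'' ρ := by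
  intro v
  rcases h₁ v with h | h
  · exact h ▸ h₂ v
  · exact Or.inr h

theorem IsSubassignment.eq_none {ρ : V → Option Bool} (h : IsSubassignment ρ fun _ => none) :
    ρ = fun _ => none :=
  funext fun v => (h v).elim id id

theorem childOk_iff [DecidableEq V] {ρ ρ' : V → Option Bool} {q : V} {b : Bool} :
    ChildOk ρ q b ρ' ↔ IsSubassignment ρ' (Function.update ρ q (some b)) := by
  refine ⟨fun h v => ?_, fun h => ⟨?_, fun v hv => ?_⟩⟩
  · rcases eq_or_ne v q with rfl | hv
    · simpa using h.1
    · simpa [hv] using h.2 v hv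
  · simpa using h q
  · simpa [hv] using h v

end Assignments

section Trees

variable {V O : Type}

theorem width_le_node_left [Fintype V] [DecidableEq V] (ρ : V → Option Bool) (q : V)
    (t0 t1 : DTree V O) : t0.width ≤ (DTree.node ρ q t0 t1).width :=
  (le_max_left _ _).trans (le_max_right _ _)

theorem width_le_node_right [Fintype V] [DecidableEq V] (ρ : V → Option Bool) (q : V)
    (t0 t1 : DTree V O) : t1.width ≤ (DTree.node ρ q t0 t1).width :=
  (le_max_right _ _).trans (le_max_right _ _)

theorem size_pos (T : DTree V O) : 0 < T.size := by
  cases T <;> simp [size]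

theorem size_cond_le (ρ : V → Option Bool) (q : V) (t0 t1 : DTree V O) (b : Bool) :
    (cond b t1 t0).size ≤ (DTree.node ρ q t0 t1).size := by
  cases b <;> simp only [size, cond_false, cond_true] <;> omega

theorem two_mul_size_smaller_le (ρ : V → Option Bool) (q : V) (t0 t1 : DTree V O) :
    2 * (cond (decide (t1.size < t0.size)) t1 t0).size ≤ (DTree.node ρ q t0 t1).size := by
  by_cases h : t1.size < t0.size <;> simp only [size, h, decide_true, decide_false, cond_true,
    cond_false] <;> omega

theorem ok_node_child [DecidableEq V] {R : (V → Bool) → O → Prop} {ρ : V → Option Bool}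
    {q : V} {t0 t1 : DTree V O} (h : (DTree.node ρ q t0 t1).Ok R) (b : Bool) :
    IsSubassignment (cond b t1 t0).rho (Function.update ρ q (some b)) ∧ (cond b t1 t0).Ok R := by
  obtain ⟨-, h0, h1, hok0, hok1⟩ := h
  cases b
  exacts [⟨childOk_iff.1 h0, hok0⟩, ⟨childOk_iff.1 h1, hok1⟩]

end Trees

section Block

variable {J : Type}

def parity [Fintype J] (y : J → Bool) : Bool :=
  decide (#{j | y j = true} % 2 = 1)

def numFixed [Fintype J] (σ : J → Option Bool) : ℕ :=
  #{j | (σ j).isSome}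

def IsFull (σ : J → Option Bool) : Prop :=
  ∀ j, (σ j).isSome

def NearlyFull [Fintype J] (σ : J → Option Bool) : Prop :=
  Fintype.card J ≤ numFixed σ + 1

instance [Fintype J] (σ : J → Option Bool) : Decidable (NearlyFull σ) :=
  inferInstanceAs (Decidable (_ ≤ _))

def fill (σ : J → Option Bool) : J → Bool :=
  fun j => (σ j).getD false

theorem parity_update_of_false [Fintype J] [DecidableEq J] {y : J → Bool} {j : J}
    (hj : y j = false) (b : Bool) :
    parity (Function.update y j b) = xor b (parity y) := by
  cases b
  · rw [Function.update_eq_self_iff.2 hj.symm, Bool.false_xor]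
  · have : #{j' | Function.update y j true j' = true} = #{j' | y j' = true} + 1 := by
      rw [← card_insert_of_notMem (s := {j' | y j' = true}) (a := j) (by simp [hj])]
      congr 1
      ext j'
      rcases eq_or_ne j' j with rfl | h <;> simp [*]
    rw [parity, parity, this, Bool.true_xor, ← decide_not, decide_eq_decide]
    omega

theorem fill_update [DecidableEq J] (σ : J → Option Bool) (j : J) (b : Bool) :
    fill (Function.update σ j (some b)) = Function.update (fill σ) j b := by
  ext j'
  rcases eq_or_ne j' j with rfl | h <;> simp [fill, *]

theorem numFixed_mono [Fintype J] {σ' σ : J → Option Bool} (h : IsSubassignment σ' σ) :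
    numFixed σ' ≤ numFixed σ := by
  refine card_le_card fun j hj => ?_
  simp only [mem_filter, mem_univ, true_and] at hj ⊢
  rcases h j with h | h <;> simp_all

theorem numFixed_update_le [Fintype J] [DecidableEq J] (σ : J → Option Bool) (j : J)
    (x : Option Bool) :
    numFixed (Function.update σ j x) ≤ numFixed σ + 1 := by
  refine (card_le_card fun j' hj' => ?_).trans (card_insert_le j _)
  rcases eq_or_ne j' j with rfl | h
  · exact mem_insert_self _ _
  · simpa [h] using hj'

theorem IsFull.numFixed_eq [Fintype J] {σ : J → Option Bool} (h : IsFull σ) :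
    numFixed σ = Fintype.card J := by
  simp [numFixed, filter_true_of_mem fun j _ => h j]

theorem IsSubassignment.eq_of_isFull {σ' σ : J → Option Bool} (h : IsSubassignment σ' σ)
    (hfull : IsFull σ') : σ' = σ :=
  funext fun j => (h j).resolve_right fun hj => by simpa [hj] using hfull j

theorem exists_extends_parity [Fintype J] [DecidableEq J] (σ : J → Option Bool) (c : Bool)
    (h : IsFull σ → parity (fill σ) = c) :
    ∃ y, Extends σ y ∧ parity y = c := by
  by_cases hfull : IsFull σ
  · exact ⟨fill σ, fun j b hj => by simp [fill, hj], h hfull⟩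
  · obtain ⟨j₀, hj₀⟩ : ∃ j₀, σ j₀ = none := by simpa [IsFull] using hfull
    refine ⟨Function.update (fill σ) j₀ (xor c (parity (fill σ))), fun j b hj => ?_, ?_⟩
    · have : j ≠ j₀ := by rintro rfl; simp [hj₀] at hj
      simp [fill, hj, this]
    · rw [parity_update_of_false (by simp [fill, hj₀]), Bool.xor_assoc, Bool.xor_self,
        Bool.xor_false]

end Block

section Composition

variable {ι J : Type}

def block (ρ : ι × J → Option Bool) (i : ι) : J → Option Bool :=
  fun j => ρ (i, j)

def xorCompose [Fintype J] (y : ι × J → Bool) : ι → Bool :=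
  fun i => parity fun j => y (i, j)

def blockParity [Fintype J] (ρ : ι × J → Option Bool) (i : ι) : Bool :=
  parity (fill (block ρ i))

def prune [Fintype J] (ρ : ι × J → Option Bool) (α : ι → Option Bool) :
    ι → Option Bool :=
  fun i => if NearlyFull (block ρ i) then α i else none

def Consistent [Fintype J] (ρ : ι × J → Option Bool) (α : ι → Option Bool) : Prop :=
  ∀ i, IsFull (block ρ i) → α i = some (blockParity ρ i)

def unresolved [Fintype ι] [Fintype J] (ρ : ι × J → Option Bool) (α : ι → Option Bool) :
    Finset ι :=
  {i | NearlyFull (block ρ i) ∧ α i = none}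

theorem IsSubassignment.block {ρ' ρ : ι × J → Option Bool} (h : IsSubassignment ρ' ρ)
    (i : ι) :
    IsSubassignment (block ρ' i) (block ρ i) :=
  fun j => h (i, j)

theorem block_update_self [DecidableEq ι] [DecidableEq J] (ρ : ι × J → Option Bool)
    (q : ι × J) (x : Option Bool) :
    block (Function.update ρ q x) q.1 = Function.update (block ρ q.1) q.2 x := by
  ext j : 1
  rcases eq_or_ne j q.2 with rfl | h
  · simp [block]
  · simp [block, h, Function.update_of_ne (show (q.1, j) ≠ q from fun hq => h (hq ▸ rfl))]

theorem block_update_of_ne [DecidableEq ι] [DecidableEq J] (ρ : ι × J → Option Bool)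
    {q : ι × J} (x : Option Bool) {i : ι} (hi : i ≠ q.1) :
    block (Function.update ρ q x) i = block ρ i := by
  ext j : 1
  simp [block, Function.update_of_ne (show (i, j) ≠ q from fun hq => hi (hq ▸ rfl))]

theorem IsFull.nearlyFull [Fintype J] {σ : J → Option Bool} (h : IsFull σ) : NearlyFull σ := by
  rw [NearlyFull, h.numFixed_eq]
  exact Nat.le_succ _

theorem nearlyFull_of_isFull_child [Fintype J] [DecidableEq ι] [DecidableEq J]
    {ρ' ρ : ι × J → Option Bool} {q : ι × J} {x : Option Bool}
    (hρ' : IsSubassignment ρ' (Function.update ρ q x)) (hfull : IsFull (block ρ' q.1)) :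
    NearlyFull (block ρ q.1) := by
  have := numFixed_mono (hρ'.block q.1)
  rw [hfull.numFixed_eq, block_update_self] at this
  exact this.trans (numFixed_update_le _ _ _)

theorem nearlyFull_of_child_of_ne [Fintype J] [DecidableEq ι] [DecidableEq J]
    {ρ' ρ : ι × J → Option Bool} {q : ι × J} {x : Option Bool}
    (hρ' : IsSubassignment ρ' (Function.update ρ q x)) {i : ι} (hi : i ≠ q.1)
    (h : NearlyFull (block ρ' i)) : NearlyFull (block ρ i) := by
  have := numFixed_mono (hρ'.block i)
  rw [block_update_of_ne _ _ hi] at this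
  exact h.trans (Nat.succ_le_succ this)

theorem prune_isSubassignment [Fintype J] (ρ : ι × J → Option Bool) (α : ι → Option Bool) :
    IsSubassignment (prune ρ α) α := by
  intro i
  unfold prune
  split_ifs <;> simp

theorem prune_of_nearlyFull [Fintype J] {ρ : ι × J → Option Bool} (α : ι → Option Bool)
    {i : ι} (h : NearlyFull (block ρ i)) : prune ρ α i = α i :=
  if_pos h

theorem Consistent.prune [Fintype J] {ρ : ι × J → Option Bool} {α : ι → Option Bool}
    (h : Consistent ρ α) : Consistent ρ (prune ρ α) := fun i hi => by
  rw [prune_of_nearlyFull _ hi.nearlyFull, h i hi]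

theorem Consistent.child [Fintype J] [DecidableEq ι] [DecidableEq J]
    {ρ' ρ : ι × J → Option Bool} {α β : ι → Option Bool} {q : ι × J} {b : Bool}
    (hα : Consistent ρ α) (hq : ρ q = none)
    (hρ' : IsSubassignment ρ' (Function.update ρ q (some b)))
    (hβ : ∀ i, i ≠ q.1 → β i = α i)
    (hβq : β q.1 = some (xor b (blockParity ρ q.1)) ∨ ¬ NearlyFull (block ρ q.1)) :
    Consistent ρ' β := by
  intro i hfull
  have hblock := (hρ'.block i).eq_of_isFull hfull
  rcases eq_or_ne i q.1 with rfl | hi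
  · refine hβq.resolve_right (not_not.2 (nearlyFull_of_isFull_child hρ' hfull)) |>.trans ?_
    unfold blockParity
    rw [hblock, block_update_self, fill_update, parity_update_of_false (by simp [fill, block, hq])]
  · rw [block_update_of_ne _ _ hi] at hblock
    rw [hβ i hi, hα i (hblock ▸ hfull), blockParity, blockParity, hblock]

theorem exists_extends_xorCompose [Fintype J] [DecidableEq J] {ρ : ι × J → Option Bool}
    {α : ι → Option Bool} (hα : Consistent ρ α) {z : ι → Bool} (hz : Extends α z) :
    ∃ y, Extends ρ y ∧ xorCompose y = z := by
  choose y hy using fun i => exists_extends_parity (block ρ i) (z i)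
    fun hfull => (hz i _ (hα i hfull)).symm
  exact ⟨fun v => y v.1 v.2, fun v b hv => (hy v.1).1 v.2 b hv, funext fun i => (hy i).2⟩

end Composition

section Unresolved

variable {ι J : Type} [Fintype ι] [Fintype J] [DecidableEq ι] [DecidableEq J]
  {ρ' ρ : ι × J → Option Bool} {q : ι × J} {x : Option Bool} {α β : ι → Option Bool}

theorem unresolved_child_erase_subset (hρ' : IsSubassignment ρ' (Function.update ρ q x))
    (hβ : ∀ i, i ≠ q.1 → β i = prune ρ α i) :
    (unresolved ρ' β).erase q.1 ⊆ (unresolved ρ α).erase q.1 := by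
  intro i hi
  simp only [unresolved, mem_erase, mem_filter, mem_univ, true_and] at hi ⊢
  obtain ⟨hne, hnear, hnone⟩ := hi
  have hnear' := nearlyFull_of_child_of_ne hρ' hne hnear
  rw [hβ i hne, prune_of_nearlyFull _ hnear'] at hnone
  exact ⟨hne, hnear', hnone⟩

theorem card_unresolved_child_le_succ (hρ' : IsSubassignment ρ' (Function.update ρ q x))
    (hβ : ∀ i, i ≠ q.1 → β i = prune ρ α i) :
    #(unresolved ρ' β) ≤ #(unresolved ρ α) + 1 :=
  calc #(unresolved ρ' β) ≤ #((unresolved ρ' β).erase q.1) + 1 := by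
        have := pred_card_le_card_erase (s := unresolved ρ' β) (a := q.1); omega
    _ ≤ #(unresolved ρ α) + 1 :=
        Nat.succ_le_succ ((card_le_card (unresolved_child_erase_subset hρ' hβ)).trans
          (card_erase_le))

theorem card_unresolved_child_le_of_isSome (hρ' : IsSubassignment ρ' (Function.update ρ q x))
    (hβ : ∀ i, i ≠ q.1 → β i = prune ρ α i) (hβq : (β q.1).isSome) :
    #(unresolved ρ' β) ≤ #((unresolved ρ α).erase q.1) := by
  have hq : q.1 ∉ unresolved ρ' β := by
    simp [unresolved, Option.isSome_iff_ne_none.1 hβq]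
  rw [← erase_eq_of_notMem hq]
  exact card_le_card (unresolved_child_erase_subset hρ' hβ)

end Unresolved

theorem card_isSome_eq_sum_numFixed {ι J : Type} [Fintype ι] [Fintype J]
    (ρ : ι × J → Option Bool) :
    #{v | (ρ v).isSome} = ∑ i, numFixed (block ρ i) := by
  rw [card_filter, Fintype.sum_prod_type]
  exact sum_congr rfl fun i _ => (card_filter _ _).symm

theorem card_isSome_prune_le {ι J : Type} [Fintype ι] [Fintype J] (ρ : ι × J → Option Bool)
    (α : ι → Option Bool) :
    (Fintype.card J - 1) * #{i | (prune ρ α i).isSome} ≤ #{v | (ρ v).isSome} := by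
  rw [card_isSome_eq_sum_numFixed, mul_comm, ← smul_eq_mul, ← sum_const]
  refine (sum_le_sum fun i hi => ?_).trans (sum_le_sum_of_subset (subset_univ _))
  have hnear : NearlyFull (block ρ i) := by
    by_contra h
    rw [mem_filter, prune, if_neg h] at hi
    simp at hi
  exact Nat.sub_le_of_le_add hnear

section Simulation

variable {ι J O : Type} [Fintype J] [DecidableEq ι]

def simulate : DTree (ι × J) O → (ι → Option Bool) → DTree ι O
  | .leaf ρ o, α => .leaf (prune ρ α) o
  | .node ρ q t0 t1, α =>
    let α := prune ρ α
    -- `next b` simulates the `b`-child; written with `bif` so that the recursion is structural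
    let next : Bool → (ι → Option Bool) → DTree ι O :=
      fun b β => bif b then simulate t1 β else simulate t0 β
    -- the answer `xor c (blockParity ρ q.1)` makes the XOR of block `q.1` equal to `c`
    if NearlyFull (block ρ q.1) then
      match α q.1 with
      | some c => next (xor c (blockParity ρ q.1)) α
      | none =>
        .node α q.1
          (next (xor false (blockParity ρ q.1)) (Function.update α q.1 (some false)))
          (next (xor true (blockParity ρ q.1)) (Function.update α q.1 (some true)))
    else next (decide (t1.size < t0.size)) α

variable {ρ : ι × J → Option Bool} {q : ι × J} {t0 t1 : DTree (ι × J) O}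
  {α : ι → Option Bool}

theorem simulate_node_of_not_nearlyFull (h : ¬ NearlyFull (block ρ q.1)) :
    simulate (.node ρ q t0 t1) α =
      simulate (cond (decide (t1.size < t0.size)) t1 t0) (prune ρ α) := by
  simp only [simulate, if_neg h]
  cases decide (t1.size < t0.size) <;> rfl

theorem simulate_node_of_eq_some (h : NearlyFull (block ρ q.1)) {c : Bool}
    (hα : α q.1 = some c) :
    simulate (.node ρ q t0 t1) α =
      simulate (cond (xor c (blockParity ρ q.1)) t1 t0) (prune ρ α) := by
  simp only [simulate, if_pos h, prune_of_nearlyFull _ h, hα]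
  cases xor c (blockParity ρ q.1) <;> rfl

theorem simulate_node_of_eq_none (h : NearlyFull (block ρ q.1)) (hα : α q.1 = none) :
    simulate (.node ρ q t0 t1) α =
      .node (prune ρ α) q.1
        (simulate (cond (xor false (blockParity ρ q.1)) t1 t0)
          (Function.update (prune ρ α) q.1 (some false)))
        (simulate (cond (xor true (blockParity ρ q.1)) t1 t0)
          (Function.update (prune ρ α) q.1 (some true))) := by
  simp only [simulate, if_pos h, prune_of_nearlyFull _ h, hα]
  cases blockParity ρ q.1 <;> rfl

end Simulation

section Properties

variable {ι J O : Type} [Fintype J] [DecidableEq ι]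

theorem isSubassignment_rho_simulate (T : DTree (ι × J) O) (α : ι → Option Bool) :
    IsSubassignment (simulate T α).rho α := by
  induction T generalizing α with
  | leaf ρ o => exact prune_isSubassignment ρ α
  | node ρ q t0 t1 ih0 ih1 =>
    have ih : ∀ b β, IsSubassignment (simulate (cond b t1 t0) β).rho β :=
      Bool.forall_bool.2 ⟨ih0, ih1⟩
    by_cases h : NearlyFull (block ρ q.1)
    · rcases hα : α q.1 with _ | c
      · rw [simulate_node_of_eq_none h hα]
        exact prune_isSubassignment ρ α
      · rw [simulate_node_of_eq_some h hα]
        exact (ih _ _).trans (prune_isSubassignment ρ α)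
    · rw [simulate_node_of_not_nearlyFull h]
      exact (ih _ _).trans (prune_isSubassignment ρ α)

theorem width_simulate_le [Fintype ι] [DecidableEq J] (T : DTree (ι × J) O)
    (α : ι → Option Bool) :
    (Fintype.card J - 1) * (simulate T α).width ≤ T.width := by
  induction T generalizing α with
  | leaf ρ o => exact card_isSome_prune_le ρ α
  | node ρ q t0 t1 ih0 ih1 =>
    have ih : ∀ b β, (Fintype.card J - 1) * (simulate (cond b t1 t0) β).width ≤
        (DTree.node ρ q t0 t1).width :=
      Bool.forall_bool.2 ⟨fun β => (ih0 β).trans (width_le_node_left _ _ _ _),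
        fun β => (ih1 β).trans (width_le_node_right _ _ _ _)⟩
    by_cases h : NearlyFull (block ρ q.1)
    · rcases hα : α q.1 with _ | c
      · rw [simulate_node_of_eq_none h hα, width, ← max_mul_mul_left, ← max_mul_mul_left]
        exact max_le ((card_isSome_prune_le ρ α).trans (le_max_left _ _))
          (max_le (ih _ _) (ih _ _))
      · rw [simulate_node_of_eq_some h hα]
        exact ih _ _
    · rw [simulate_node_of_not_nearlyFull h]
      exact ih _ _

theorem ok_simulate {Rel : (ι → Bool) → O → Prop} [DecidableEq J] (T : DTree (ι × J) O)
    (α : ι → Option Bool) (hT : T.Ok fun y o => Rel (xorCompose y) o)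
    (hα : Consistent T.rho α) : (simulate T α).Ok Rel := by
  induction T generalizing α with
  | leaf ρ o =>
    intro z hz
    obtain ⟨y, hy, rfl⟩ := exists_extends_xorCompose hα.prune hz
    exact hT y hy
  | node ρ q t0 t1 ih0 ih1 =>
    have ih : ∀ b β, (cond b t1 t0).Ok (fun y o => Rel (xorCompose y) o) →
        Consistent (cond b t1 t0).rho β → (simulate (cond b t1 t0) β).Ok Rel :=
      Bool.forall_bool.2 ⟨ih0, ih1⟩
    have hq : ρ q = none := hT.1
    have hα' : Consistent ρ (prune ρ α) := hα.prune
    by_cases h : NearlyFull (block ρ q.1)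
    · rcases hα : α q.1 with _ | c
      · rw [simulate_node_of_eq_none h hα]
        have hchild : ∀ c : Bool, (simulate (cond (xor c (blockParity ρ q.1)) t1 t0)
            (Function.update (prune ρ α) q.1 (some c))).Ok Rel := fun c =>
          ih _ _ (ok_node_child hT _).2 <| hα'.child hq (ok_node_child hT _).1
            (fun i hi => Function.update_of_ne hi _ _) (Or.inl (by simp))
        exact ⟨by rwa [prune_of_nearlyFull _ h], childOk_iff.2 (isSubassignment_rho_simulate _ _),
          childOk_iff.2 (isSubassignment_rho_simulate _ _), hchild false, hchild true⟩
      · rw [simulate_node_of_eq_some h hα]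
        exact ih _ _ (ok_node_child hT _).2 <| hα'.child hq (ok_node_child hT _).1
          (fun _ _ => rfl) (Or.inl (by simp [prune_of_nearlyFull _ h, hα]))
    · rw [simulate_node_of_not_nearlyFull h]
      exact ih _ _ (ok_node_child hT _).2 <|
        hα'.child hq (ok_node_child hT _).1 (fun _ _ => rfl) (Or.inr h)

theorem two_pow_add_le {d j u' u k s' s : ℕ} (hd : 2 ^ d ≤ 2 ^ u' * s') (hu : u' + j ≤ u + k)
    (hs : 2 ^ k * s' ≤ s) : 2 ^ (d + j) ≤ 2 ^ u * s :=
  calc 2 ^ (d + j) ≤ 2 ^ (u' + j) * s' := by rw [pow_add, pow_add, mul_right_comm]; gcongr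
    _ ≤ 2 ^ (u + k) * s' := by gcongr; exact one_le_two
    _ = 2 ^ u * (2 ^ k * s') := by rw [pow_add, mul_assoc]
    _ ≤ 2 ^ u * s := by gcongr

theorem two_pow_depth_simulate_le [Fintype ι] [DecidableEq J]
    {R : (ι × J → Bool) → O → Prop}
    (T : DTree (ι × J) O) (α : ι → Option Bool) (hT : T.Ok R) :
    2 ^ (simulate T α).depth ≤ 2 ^ #(unresolved T.rho α) * T.size := by
  induction T generalizing α with
  | leaf ρ o => simpa [simulate, depth, size] using Nat.one_le_two_pow
  | node ρ q t0 t1 ih0 ih1 =>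
    have ih : ∀ b β, (cond b t1 t0).Ok R → 2 ^ (simulate (cond b t1 t0) β).depth ≤
        2 ^ #(unresolved (cond b t1 t0).rho β) * (cond b t1 t0).size :=
      Bool.forall_bool.2 ⟨ih0, ih1⟩
    change _ ≤ 2 ^ #(unresolved ρ α) * _
    by_cases h : NearlyFull (block ρ q.1)
    · rcases hα : α q.1 with _ | c
      · have hmem : q.1 ∈ unresolved ρ α := by simp [unresolved, h, hα]
        have hchild : ∀ c : Bool, 2 ^ ((simulate (cond (xor c (blockParity ρ q.1)) t1 t0)
            (Function.update (prune ρ α) q.1 (some c))).depth + 1) ≤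
            2 ^ #(unresolved ρ α) * (DTree.node ρ q t0 t1).size := fun c => by
          have hU := card_unresolved_child_le_of_isSome
            (ok_node_child hT (xor c (blockParity ρ q.1))).1
            (β := Function.update (prune ρ α) q.1 (some c))
            (fun i hi => Function.update_of_ne hi _ _) (by simp)
          rw [card_erase_of_mem hmem] at hU
          have hpos := card_pos.2 ⟨_, hmem⟩
          exact two_pow_add_le (k := 0) (ih _ _ (ok_node_child hT _).2) (by omega)
            (by simpa using size_cond_le _ _ _ _ _)
        rw [simulate_node_of_eq_none h hα, depth, add_comm, ← max_add_add_right,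
          (pow_right_monotone one_le_two).map_max]
        exact max_le (hchild false) (hchild true)
      · rw [simulate_node_of_eq_some h hα]
        have hU := card_unresolved_child_le_of_isSome
          (ok_node_child hT (xor c (blockParity ρ q.1))).1 (β := prune ρ α) (fun _ _ => rfl)
          (by simp [prune_of_nearlyFull _ h, hα])
        exact two_pow_add_le (j := 0) (k := 0) (ih _ _ (ok_node_child hT _).2)
          (hU.trans card_erase_le) (by simpa using size_cond_le _ _ _ _ _)
    · rw [simulate_node_of_not_nearlyFull h]
      exact two_pow_add_le (j := 0) (k := 1) (ih _ _ (ok_node_child hT _).2)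
        (card_unresolved_child_le_succ (ok_node_child hT _).1 (β := prune ρ α) (fun _ _ => rfl))
        (by simpa using two_mul_size_smaller_le _ _ _ _)

end Properties

theorem exists_solves_of_solves_xorCompose {ι J O : Type} [Fintype ι] [DecidableEq ι]
    [Fintype J] [DecidableEq J] (hJ : 2 ≤ Fintype.card J) {Rel : (ι → Bool) → O → Prop}
    {T : DTree (ι × J) O} (hT : T.Solves fun y o => Rel (xorCompose y) o) :
    ∃ T' : DTree ι O, T'.Solves Rel ∧
      (Fintype.card J - 1) * T'.width ≤ T.width ∧ 2 ^ T'.depth ≤ T.size := by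
  obtain ⟨hOk, hroot⟩ := hT
  have hfree : ∀ i, numFixed (block T.rho i) = 0 := fun i => by simp [numFixed, block, hroot]
  have hconsistent : Consistent T.rho fun _ => none := fun i hfull => by
    have := hfull.numFixed_eq
    rw [hfree] at this
    omega
  have hunresolved : unresolved T.rho (fun _ => none) = ∅ := by
    simp only [unresolved, NearlyFull, hfree, filter_eq_empty_iff]
    omega
  refine ⟨simulate T fun _ => none, ⟨ok_simulate T _ hOk hconsistent,
    (isSubassignment_rho_simulate T _).eq_none⟩, width_simulate_le T _, ?_⟩
  simpa [hunresolved] using two_pow_depth_simulate_le T (fun _ => none) hOk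

end XorLift

theorem stmt_11_general (n m : ℕ) (hm : 2 ≤ m) (O : Type)
    (Rel : (Fin n → Bool) → O → Prop)
    (T : DTree (Fin n × Fin m) O) (w s : ℕ)
    (hT : DTree.Solves
      (fun y o => Rel
        (fun i => decide
          ((Finset.univ.filter fun j : Fin m => y (i, j) = true).card % 2 = 1)) o) T)
    (hw : T.width ≤ w) (hs : T.size = s) :
    ∃ T' : DTree (Fin n) O, DTree.Solves Rel T' ∧
      (T'.width : ℝ) ≤ (w : ℝ) / ((m : ℝ) - 1) ∧
      (T'.depth : ℝ) ≤ Real.logb 2 s := by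
  obtain ⟨T', hT', hwidth, hdepth⟩ :=
    XorLift.exists_solves_of_solves_xorCompose (J := Fin m) (by simpa using hm) hT
  rw [Fintype.card_fin] at hwidth
  refine ⟨T', hT', ?_, ?_⟩
  · have hm' : (0 : ℝ) < m - 1 := by
      have : (2 : ℝ) ≤ m := by exact_mod_cast hm
      linarith
    rw [le_div_iff₀ hm']
    have : ((m - 1 : ℕ) : ℝ) * T'.width ≤ w := by exact_mod_cast hwidth.trans hw
    rwa [Nat.cast_sub (by omega), Nat.cast_one, mul_comm] at this
  · rw [← hs, Real.le_logb_iff_rpow_le one_lt_two (by exact_mod_cast XorLift.size_pos T),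
      Real.rpow_natCast]
    exact_mod_cast hdepth

/-- lifting for decision trees: if the `XOR_m`-composed search problem
`ℛ ∘ XOR_m^n` has a decision tree of width `w` and size `s`, then `ℛ` has a decision
tree of width at most `w/(m-1)` and depth at most `log₂ s`. -/
theorem stmt_11 (n m : ℕ) (hm : 2 ≤ m) (O : Type)
    (Rel : (Fin n → Bool) → O → Prop) (htotal : ∀ x, ∃ o, Rel x o)
    (T : DTree (Fin n × Fin m) O) (w s : ℕ)
    (hT : DTree.Solves
      (fun y o => Rel
        (fun i => decide
          ((Finset.univ.filter fun j : Fin m => y (i, j) = true).card % 2 = 1)) o) T)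
    (hw : T.width ≤ w) (hs : T.size = s) :
    ∃ T' : DTree (Fin n) O, DTree.Solves Rel T' ∧
      (T'.width : ℝ) ≤ (w : ℝ) / ((m : ℝ) - 1) ∧
      (T'.depth : ℝ) ≤ Real.logb 2 s :=
  stmt_11_general n m hm O Rel T w s hT hw hs
end

section
/- Let T ⊆ A × B be a triangle, i.e., there exist functions a_T : A → ℝ and b_T : B → ℝ with T = {(x,y) : a_T(x) < b_T(y)}. Let R = R^X × R^Y ⊆ A × B be any finite nonempty rectangle, and let T₁ ⊆ A × B also be a triangle. If R ⊆ T ⊆ T₁ ∪ T₂ for some set T₂, then at least one of the following holds: (i) T₁ contains a sub-rectangle Q = Q^X × Q^Y ⊆ R with |Q^X| ≥ |R^X|/2 and |Q^Y| ≥ |R^Y|/2, or (ii) T₂ contains such a sub-rectangle Q ⊆ R with |Q^X| ≥ |R^X|/2 and |Q^Y| ≥ |R^Y|/2. -/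
/-!
Order the rows by their label `a₁` and the columns by their label `b₁`, and pick a median
row `x₀` and a median column `y₀`. If `(x₀, y₀)` lies in the triangle `T₁`, i.e.
`a₁ x₀ < b₁ y₀`, then so does every pair of a row below `x₀` and a column above `y₀`. Otherwise
every pair of a row above `x₀` and a column below `y₀` misses `T₁`, so it lies in `T₂`.
-/

open Finset

section Median

variable {α β : Type*} [LinearOrder β] (s : Finset α) (f : α → β)

theorem Finset.two_mul_card_filter_lt_le {c : α}
    (hc : ∀ d ∈ s, #s ≤ 2 * #{x ∈ s | f x ≤ f d} → f c ≤ f d) :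
    2 * #{x ∈ s | f x < f c} ≤ #s := by
  -- Otherwise the largest value strictly below `f c` would already have half of `s` below it.
  by_contra! hlarge
  have hne : {x ∈ s | f x < f c}.Nonempty := by
    rw [← card_pos]
    omega
  obtain ⟨d, hd, hdmax⟩ := exists_max_image _ f hne
  rw [mem_filter] at hd
  have hsub : {x ∈ s | f x < f c} ⊆ {x ∈ s | f x ≤ f d} := fun x hx =>
    mem_filter.mpr ⟨(mem_filter.mp hx).1, hdmax x hx⟩
  have hcd := hc d hd.1 (by have := card_le_card hsub; omega)
  exact absurd hd.2 hcd.not_gt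

theorem Finset.exists_median (hs : s.Nonempty) :
    ∃ c ∈ s, #s ≤ 2 * #{x ∈ s | f x ≤ f c} ∧ #s ≤ 2 * #{x ∈ s | f c ≤ f x} := by
  set t := {c ∈ s | #s ≤ 2 * #{x ∈ s | f x ≤ f c}}
  have ht : t.Nonempty := by
    obtain ⟨m, hm, hmax⟩ := exists_max_image s f hs
    refine ⟨m, mem_filter.mpr ⟨hm, ?_⟩⟩
    rw [filter_true_of_mem hmax]
    omega
  obtain ⟨c, hct, hcmin⟩ := exists_min_image t f ht
  obtain ⟨hcs, hc_le⟩ := mem_filter.mp hct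
  have hlt := two_mul_card_filter_lt_le s f fun d hd hd_le => hcmin d (mem_filter.mpr ⟨hd, hd_le⟩)
  have hsplit := card_filter_add_card_filter_not (s := s) (fun x => f x < f c)
  simp only [not_lt] at hsplit
  exact ⟨c, hcs, hc_le, by omega⟩

end Median

theorem exists_half_quadrant_lt_or_ge {A B β : Type*} [LinearOrder β] (a : A → β) (b : B → β)
    (RX : Finset A) (RY : Finset B) (hRX : RX.Nonempty) (hRY : RY.Nonempty) :
    ∃ QX ⊆ RX, ∃ QY ⊆ RY, #RX ≤ 2 * #QX ∧ #RY ≤ 2 * #QY ∧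
      ((∀ x ∈ QX, ∀ y ∈ QY, a x < b y) ∨ (∀ x ∈ QX, ∀ y ∈ QY, b y ≤ a x)) := by
  obtain ⟨x₀, -, hx_le, hx_ge⟩ := RX.exists_median a hRX
  obtain ⟨y₀, -, hy_le, hy_ge⟩ := RY.exists_median b hRY
  rcases lt_or_ge (a x₀) (b y₀) with hin | hout
  · refine ⟨_, filter_subset _ _, _, filter_subset _ _, hx_le, hy_ge, Or.inl ?_⟩
    intro x hx y hy
    exact (mem_filter.mp hx).2.trans_lt (hin.trans_le (mem_filter.mp hy).2)
  · refine ⟨_, filter_subset _ _, _, filter_subset _ _, hx_ge, hy_le, Or.inr ?_⟩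
    intro x hx y hy
    exact (mem_filter.mp hy).2.trans (hout.trans (mem_filter.mp hx).2)

theorem stmt_17_general (A B : Type) (T T1 T2 : Set (A × B))
    (hT1 : ∃ (a1 : A → ℝ) (b1 : B → ℝ), T1 = {p : A × B | a1 p.1 < b1 p.2})
    (RX : Finset A) (RY : Finset B) (hRX : RX.Nonempty) (hRY : RY.Nonempty)
    (hRT : ∀ p : A × B, p.1 ∈ RX → p.2 ∈ RY → p ∈ T)
    (hTcov : T ⊆ T1 ∪ T2) :
    ∃ (QX : Finset A) (QY : Finset B), QX ⊆ RX ∧ QY ⊆ RY ∧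
      RX.card ≤ 2 * QX.card ∧ RY.card ≤ 2 * QY.card ∧
      ((∀ p : A × B, p.1 ∈ QX → p.2 ∈ QY → p ∈ T1) ∨
       (∀ p : A × B, p.1 ∈ QX → p.2 ∈ QY → p ∈ T2)) := by
  obtain ⟨a1, b1, rfl⟩ := hT1
  obtain ⟨QX, hQX, QY, hQY, hcardX, hcardY, hin | hout⟩ :=
    exists_half_quadrant_lt_or_ge a1 b1 RX RY hRX hRY
  · exact ⟨QX, QY, hQX, hQY, hcardX, hcardY, Or.inl fun p hx hy => hin _ hx _ hy⟩
  · refine ⟨QX, QY, hQX, hQY, hcardX, hcardY, Or.inr fun p hx hy => ?_⟩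
    have hnot : p ∉ {p : A × B | a1 p.1 < b1 p.2} := (hout _ hx _ hy).not_gt
    exact (hTcov (hRT p (hQX hx) (hQY hy))).resolve_left hnot

/-- quadrant lemma: let `T` and `T₁` be triangles in `A × B` (sets cut
out by real row- and column-labels), let `R = R^X × R^Y` be a finite nonempty rectangle
with `R ⊆ T ⊆ T₁ ∪ T₂`. Then `T₁` or `T₂` contains a sub-rectangle `Q = Q^X × Q^Y ⊆ R`
with `|Q^X| ≥ |R^X|/2` and `|Q^Y| ≥ |R^Y|/2`. -/
theorem stmt_17 (A B : Type) (T T1 T2 : Set (A × B))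
    (hT : ∃ (aT : A → ℝ) (bT : B → ℝ), T = {p : A × B | aT p.1 < bT p.2})
    (hT1 : ∃ (a1 : A → ℝ) (b1 : B → ℝ), T1 = {p : A × B | a1 p.1 < b1 p.2})
    (RX : Finset A) (RY : Finset B) (hRX : RX.Nonempty) (hRY : RY.Nonempty)
    (hRT : ∀ p : A × B, p.1 ∈ RX → p.2 ∈ RY → p ∈ T)
    (hTcov : T ⊆ T1 ∪ T2) :
    ∃ (QX : Finset A) (QY : Finset B), QX ⊆ RX ∧ QY ⊆ RY ∧
      RX.card ≤ 2 * QX.card ∧ RY.card ≤ 2 * QY.card ∧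
      ((∀ p : A × B, p.1 ∈ QX → p.2 ∈ QY → p ∈ T1) ∨
       (∀ p : A × B, p.1 ∈ QX → p.2 ∈ QY → p ∈ T2)) :=
  stmt_17_general A B T T1 T2 hT1 RX RY hRX hRY hRT hTcov
end

section
/- Let X ⊆ [m]^n be finite and nonempty with density |X|/m^n ≥ m^{-(1-δ)w} for some δ ∈ (0,1) and integer 0 ≤ w ≤ n. Suppose I ⊆ [n] is a maximal set of coordinates on which X is not δ-dense, i.e., there exists α : I → [m] with |{x ∈ X : x_I = α}| ≥ |X| · m^{-δ|I|}, and no strictly larger J ⊇ I admits such a witness (and I = ∅ if no coordinate set admits a witness). Fix such a witness α. Then: (a) |I| ≤ w, and (b) the set X_α = {x ∈ X : x_I = α} satisfies that for every nonempty J ⊆ [n] ∖ I and every β : J → [m], |{x ∈ X_α : x_J = β}| < |X_α| · m^{-δ|J|}. -/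
/-!
(a) The fibre `X_α` has at most `m^(n - |I|)` points, while density of `X` and the witness
property give it at least `m^(n - (1-δ)w - δ|I|)` points; comparing exponents gives
`(1-δ)|I| ≤ (1-δ)w`.
(b) A heavy pattern `β` on `J` inside `X_α` glues with `α` into a pattern on `I ∪ J` that is
heavy in `X`, because `m^(-δ|I ∪ J|) = m^(-δ|I|) m^(-δ|J|)`; this contradicts maximality of `I`.
-/

open Finset

lemma card_le_of_forall_eqOn {ι κ : Type*} [Finite ι] [Finite κ] {I : Finset ι} {α : ι → κ}
    {Y : Finset (ι → κ)} (hY : ∀ x ∈ Y, Set.EqOn x α I) :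
    #Y ≤ Nat.card κ ^ (Nat.card ι - #I) := by
  classical
  have := Fintype.ofFinite ι
  have := Fintype.ofFinite κ
  have hinj : Set.InjOn (fun (x : ι → κ) (i : {i // i ∉ I}) => x i) Y := by
    intro x hx y hy hxy
    funext i
    by_cases hi : i ∈ I
    · rw [hY x hx hi, hY y hy hi]
    · exact congrFun hxy ⟨i, hi⟩
  calc #Y ≤ #(univ : Finset ({i // i ∉ I} → κ)) :=
        card_le_card_of_injOn _ (fun _ _ => mem_coe.2 (mem_univ _)) hinj
    _ = Nat.card κ ^ (Nat.card ι - #I) := by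
        simp [Fintype.card_subtype_compl, Nat.card_eq_fintype_card]

lemma forall_mem_union_eq_piecewise_iff {ι κ : Type*} [DecidableEq ι] {I J : Finset ι}
    (hJI : Disjoint J I) (α β x : ι → κ) :
    (∀ i ∈ I ∪ J, x i = I.piecewise α β i) ↔ (∀ i ∈ I, x i = α i) ∧ ∀ i ∈ J, x i = β i := by
  have hβ : ∀ i ∈ J, I.piecewise α β i = β i :=
    fun i hi => piecewise_eq_of_notMem _ _ _ (disjoint_left.mp hJI hi)
  simp +contextual only [mem_union, or_imp, forall_and, piecewise_eq_of_mem, hβ]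

lemma card_le_of_dense_of_heavy_pattern {n m w : ℕ} (hm : 1 < (m : ℝ)) {δ : ℝ} (hδ1 : δ < 1)
    {X : Finset (Fin n → Fin m)}
    (hdens : (m : ℝ) ^ n * (m : ℝ) ^ (-((1 - δ) * (w : ℝ))) ≤ #X)
    {I : Finset (Fin n)} {α : Fin n → Fin m}
    (hwit : (#X : ℝ) * (m : ℝ) ^ (-(δ * (#I : ℝ))) ≤ #(X.filter fun x => ∀ i ∈ I, x i = α i)) :
    #I ≤ w := by
  have hm0 : (0 : ℝ) < m := one_pos.trans hm
  have hupper : (#(X.filter fun x => ∀ i ∈ I, x i = α i) : ℝ) ≤ (m : ℝ) ^ ((n : ℝ) - #I) := by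
    have hcard := card_le_of_forall_eqOn (Y := X.filter fun x => ∀ i ∈ I, x i = α i)
      fun x hx _ hi => (mem_filter.1 hx).2 _ hi
    simp only [Nat.card_eq_fintype_card, Fintype.card_fin] at hcard
    rw [← Nat.cast_sub (card_le_univ I |>.trans_eq (Fintype.card_fin n)), Real.rpow_natCast]
    exact_mod_cast hcard
  have hlower : (m : ℝ) ^ ((n : ℝ) - (1 - δ) * w - δ * #I)
      ≤ #(X.filter fun x => ∀ i ∈ I, x i = α i) :=
    calc (m : ℝ) ^ ((n : ℝ) - (1 - δ) * w - δ * #I)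
        = (m : ℝ) ^ n * (m : ℝ) ^ (-((1 - δ) * (w : ℝ))) * (m : ℝ) ^ (-(δ * (#I : ℝ))) := by
          rw [← Real.rpow_natCast, ← Real.rpow_add hm0, ← Real.rpow_add hm0]
          ring_nf
      _ ≤ #X * (m : ℝ) ^ (-(δ * (#I : ℝ))) := by gcongr
      _ ≤ _ := hwit
  have hexp := (Real.rpow_le_rpow_left_iff hm).mp (hlower.trans hupper)
  have : (1 - δ) * #I ≤ (1 - δ) * w := by linarith
  exact_mod_cast le_of_mul_le_mul_left this (by linarith)

lemma card_filter_filter_lt_of_maximal {n m : ℕ} (hm : 0 < (m : ℝ)) {δ : ℝ}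
    {X : Finset (Fin n → Fin m)} {I : Finset (Fin n)} {α : Fin n → Fin m}
    (hwit : (#X : ℝ) * (m : ℝ) ^ (-(δ * (#I : ℝ))) ≤ #(X.filter fun x => ∀ i ∈ I, x i = α i))
    (hmax : ∀ J : Finset (Fin n), I ⊂ J → ∀ β : Fin n → Fin m,
        ¬ ((#X : ℝ) * (m : ℝ) ^ (-(δ * (#J : ℝ))) ≤ #(X.filter fun x => ∀ i ∈ J, x i = β i)))
    {J : Finset (Fin n)} (hJ : J.Nonempty) (hJI : Disjoint J I) (β : Fin n → Fin m) :
    (#((X.filter fun x => ∀ i ∈ I, x i = α i).filter fun x => ∀ i ∈ J, x i = β i) : ℝ)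
      < #(X.filter fun x => ∀ i ∈ I, x i = α i) * (m : ℝ) ^ (-(δ * (#J : ℝ))) := by
  have hIJ : I ⊂ I ∪ J := by
    obtain ⟨j, hj⟩ := hJ
    exact ssubset_iff_of_subset subset_union_left |>.mpr
      ⟨j, mem_union_right _ hj, disjoint_left.mp hJI hj⟩
  have hsplit : (m : ℝ) ^ (-(δ * (#(I ∪ J) : ℝ)))
      = (m : ℝ) ^ (-(δ * (#I : ℝ))) * (m : ℝ) ^ (-(δ * (#J : ℝ))) := by
    rw [← Real.rpow_add hm, card_union_of_disjoint hJI.symm]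
    push_cast
    ring_nf
  rw [filter_filter, filter_congr fun x _ => (forall_mem_union_eq_piecewise_iff hJI α β x).symm]
  calc _ < (#X : ℝ) * (m : ℝ) ^ (-(δ * (#(I ∪ J) : ℝ))) :=
        lt_of_not_ge (hmax _ hIJ (I.piecewise α β))
    _ = #X * (m : ℝ) ^ (-(δ * (#I : ℝ))) * (m : ℝ) ^ (-(δ * (#J : ℝ))) := by
        rw [hsplit, mul_assoc]
    _ ≤ _ := by gcongr

theorem stmt_18_general (n m w : ℕ) (hm : 2 ≤ m)
    (δ : ℝ) (hδ1 : δ < 1)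
    (X : Finset (Fin n → Fin m))
    (hdens : ((m : ℝ) ^ n) * (m : ℝ) ^ (-((1 - δ) * (w : ℝ))) ≤ (X.card : ℝ))
    (I : Finset (Fin n)) (α : Fin n → Fin m)
    (hwit : (X.card : ℝ) * (m : ℝ) ^ (-(δ * (I.card : ℝ)))
        ≤ ((X.filter fun x => ∀ i ∈ I, x i = α i).card : ℝ))
    (hmax : ∀ J : Finset (Fin n), I ⊂ J → ∀ β : Fin n → Fin m,
        ¬ ((X.card : ℝ) * (m : ℝ) ^ (-(δ * (J.card : ℝ)))
            ≤ ((X.filter fun x => ∀ i ∈ J, x i = β i).card : ℝ))) :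
    I.card ≤ w ∧
      ∀ J : Finset (Fin n), J.Nonempty → Disjoint J I → ∀ β : Fin n → Fin m,
        (((X.filter fun x => ∀ i ∈ I, x i = α i).filter
            fun x => ∀ i ∈ J, x i = β i).card : ℝ)
          < ((X.filter fun x => ∀ i ∈ I, x i = α i).card : ℝ)
              * (m : ℝ) ^ (-(δ * (J.card : ℝ))) := by
  have hm1 : (1 : ℝ) < m := by exact_mod_cast hm
  exact ⟨card_le_of_dense_of_heavy_pattern hm1 hδ1 hdens hwit,
    fun J hJ hJI β => card_filter_filter_lt_of_maximal (one_pos.trans hm1) hwit hmax hJ hJI β⟩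

/-- suppose `X ⊆ [m]^n` has density at least `m^{-(1-δ)w}`, `(I, α)` is a
witness that `X` is not `δ`-dense on `I` (i.e. the pattern `α` on `I` is taken by at
least an `m^{-δ|I|}` fraction of `X`), and `I` is maximal: no strict superset `J ⊇ I`
admits such a witness. Then (a) `|I| ≤ w`, and (b) `X_α = {x ∈ X : x_I = α}` is
`α`-dense: every pattern `β` on a nonempty `J ⊆ [n] ∖ I` is taken by less than an
`m^{-δ|J|}` fraction of `X_α`. -/
theorem stmt_18 (n m w : ℕ) (hm : 2 ≤ m) (hw : w ≤ n)
    (δ : ℝ) (hδ0 : 0 < δ) (hδ1 : δ < 1)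
    (X : Finset (Fin n → Fin m)) (hX : X.Nonempty)
    (hdens : ((m : ℝ) ^ n) * (m : ℝ) ^ (-((1 - δ) * (w : ℝ))) ≤ (X.card : ℝ))
    (I : Finset (Fin n)) (α : Fin n → Fin m)
    (hwit : (X.card : ℝ) * (m : ℝ) ^ (-(δ * (I.card : ℝ)))
        ≤ ((X.filter fun x => ∀ i ∈ I, x i = α i).card : ℝ))
    (hmax : ∀ J : Finset (Fin n), I ⊂ J → ∀ β : Fin n → Fin m,
        ¬ ((X.card : ℝ) * (m : ℝ) ^ (-(δ * (J.card : ℝ)))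
            ≤ ((X.filter fun x => ∀ i ∈ J, x i = β i).card : ℝ))) :
    I.card ≤ w ∧
      ∀ J : Finset (Fin n), J.Nonempty → Disjoint J I → ∀ β : Fin n → Fin m,
        (((X.filter fun x => ∀ i ∈ I, x i = α i).filter
            fun x => ∀ i ∈ J, x i = β i).card : ℝ)
          < ((X.filter fun x => ∀ i ∈ I, x i = α i).card : ℝ)
              * (m : ℝ) ^ (-(δ * (J.card : ℝ))) :=
  stmt_18_general n m w hm δ hδ1 X hdens I α hwit hmax
end
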